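/- arXiv:1102.3639 — 8 statements merged into one kernel-verified Lean document; each statement's English description precedes it below -/
import Mathlib

section
/- Let Φ be of type A_n with l = n+1 and let ν be a weight of the weight lattice. If lν = (n+1)ν can be written as a sum of distinct positive roots of Φ, then ν = ϖ_i for some fundamental weight ϖ_i (0 ≤ i ≤ n, with ϖ_0 = 0). Conversely, (n+1)ϖ_i is a sum of distinct positive roots for every 0 ≤ i ≤ n (namely, the sum of all positive roots containing α_i). -/
/-- The Cartan matrix of type `A_n` (entries `⟨α_t, α_k^∨⟩`). -/
def cartanA (n : ℕ) (k t : Fin n) : ℤ :=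
  if k = t then 2 else if (k : ℕ) + 1 = (t : ℕ) ∨ (t : ℕ) + 1 = (k : ℕ) then -1 else 0

/-- The positive root `α_{p.1} + ⋯ + α_{p.2}` of type `A_n` (for `p.1 ≤ p.2`), written in
fundamental-weight coordinates, i.e. its pairings with the simple coroots. -/
def posRootA (n : ℕ) (p : Fin n × Fin n) : Fin n → ℤ :=
  fun k => ∑ t ∈ Finset.Icc p.1 p.2, cartanA n k t

/-- `μ` is a sum of pairwise distinct positive roots of `A_n` (positive roots are in
bijection with pairs `p.1 ≤ p.2`). -/
def IsSumOfDistinctPosRootsA (n : ℕ) (μ : Fin n → ℤ) : Prop :=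
  ∃ S : Finset (Fin n × Fin n), (∀ p ∈ S, p.1 ≤ p.2) ∧ μ = ∑ p ∈ S, posRootA n p

/-!
In the standard realization of `A_n` in `ℤ^{n+1}`, the root `α_a + ⋯ + α_b` is `ε_a - ε_{b+1}`,
and a weight with `ε`-coordinates `v` has fundamental-weight coordinates `v_k - v_{k+1}`.
If `S` is a set of positive roots, the `ε_t`-coordinate of their sum is the number of roots of `S`
starting at `t` minus the number ending at `t - 1`, hence lies in `[-t, n - t]`. When the sum is
`(n+1)ν`, each `(n+1)ν_k = v_k - v_{k+1} ≥ 1 - n` forces `ν_k ≥ 0`, and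
`(n+1) ∑ ν_k = v_0 - v_n ≤ 2n` forces `∑ ν_k ≤ 1`; so `ν` is `0` or some `ϖ_i`.
Conversely the roots containing `α_i` sum to `(n - i) ∑_{a ≤ i} ε_a - (i + 1) ∑_{c > i} ε_c`,
whose fundamental-weight coordinates are `(n + 1) ϖ_i`.
-/

open Finset

theorem eq_zero_or_eq_single_of_nonneg_of_sum_le_one {ι : Type*} [Fintype ι] [DecidableEq ι]
    {f : ι → ℤ} (h₀ : ∀ i, 0 ≤ f i) (h₁ : ∑ i, f i ≤ 1) : f = 0 ∨ ∃ i, f = Pi.single i 1 := by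
  by_cases hf : ∃ i, f i ≠ 0
  · obtain ⟨i, hi⟩ := hf
    have hfi : f i = 1 := le_antisymm ((single_le_sum (fun j _ => h₀ j) (mem_univ i)).trans h₁)
      (lt_of_le_of_ne (h₀ i) hi.symm)
    refine Or.inr ⟨i, funext fun j => ?_⟩
    rcases eq_or_ne j i with rfl | hji
    · simp [hfi]
    · have : f i + f j ≤ 1 := by
        rw [← sum_pair hji.symm]
        exact (sum_le_sum_of_subset_of_nonneg (subset_univ _) fun k _ _ => h₀ k).trans h₁
      rw [Pi.single_eq_of_ne hji]
      linarith [h₀ j]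
  · push Not at hf
    exact Or.inl (funext hf)

namespace TypeA

variable {n : ℕ}

def fundCoords (n : ℕ) : (Fin (n + 1) → ℤ) →+ (Fin n → ℤ) where
  toFun v k := v k.castSucc - v k.succ
  map_zero' := by ext; simp
  map_add' v w := by ext; simp only [Pi.add_apply]; ring

@[simp]
lemma fundCoords_apply (v : Fin (n + 1) → ℤ) (k : Fin n) :
    fundCoords n v k = v k.castSucc - v k.succ := rfl

def epsRoot (p : Fin n × Fin n) : Fin (n + 1) → ℤ :=
  Pi.single p.1.castSucc 1 - Pi.single p.2.succ 1

lemma cartanA_eq_sub (k t : Fin n) :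
    cartanA n k t =
      fundCoords n (Pi.single t.castSucc 1) k - fundCoords n (Pi.single t.succ 1) k := by
  simp only [cartanA, fundCoords_apply, Pi.single_apply, Fin.ext_iff, Fin.val_castSucc,
    Fin.val_succ]
  split_ifs <;> omega

lemma posRootA_eq_fundCoords_epsRoot {p : Fin n × Fin n} (hp : p.1 ≤ p.2) :
    posRootA n p = fundCoords n (epsRoot p) := by
  ext k
  have := Fin.sum_Icc_sub hp (fun x => fundCoords n (Pi.single x 1) k)
  simp only [posRootA, cartanA_eq_sub, epsRoot, map_sub, Pi.sub_apply]
  rw [sum_sub_distrib] at this ⊢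
  linarith

lemma sum_posRootA_eq_fundCoords {S : Finset (Fin n × Fin n)} (hS : ∀ p ∈ S, p.1 ≤ p.2) :
    ∑ p ∈ S, posRootA n p = fundCoords n (∑ p ∈ S, epsRoot p) := by
  rw [map_sum]
  exact sum_congr rfl fun p hp => posRootA_eq_fundCoords_epsRoot (hS p hp)

lemma sum_fundCoords (v : Fin (n + 1) → ℤ) : ∑ k, fundCoords n v k = v 0 - v (Fin.last n) := by
  cases n with
  | zero => simp
  | succ m =>
    have := Fin.sum_Iic_sub (⊤ : Fin (m + 1)) v
    rw [Iic_top, Fin.top_eq_last, Fin.succ_last] at this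
    simp only [fundCoords_apply, sum_sub_distrib] at this ⊢
    linarith

section Bounds

variable {S : Finset (Fin n × Fin n)} (hS : ∀ p ∈ S, p.1 ≤ p.2)
include hS

lemma card_filter_castSucc_fst_le (t : Fin (n + 1)) :
    #{p ∈ S | t = p.1.castSucc} ≤ n - t := by
  refine (card_le_card_of_injOn (fun p : Fin n × Fin n => (p.2 : ℕ)) (t := Ico (t : ℕ) n)
    ?_ ?_).trans_eq (Nat.card_Ico _ _)
  · intro p hp
    rw [mem_coe, mem_filter] at hp
    rw [mem_coe, mem_Ico, hp.2, Fin.val_castSucc]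
    exact ⟨hS p hp.1, p.2.isLt⟩
  · intro p hp q hq hpq
    rw [mem_coe, mem_filter] at hp hq
    exact Prod.ext (Fin.castSucc_injective _ (hp.2.symm.trans hq.2)) (Fin.ext hpq)

lemma card_filter_succ_snd_le (t : Fin (n + 1)) :
    #{p ∈ S | t = p.2.succ} ≤ t := by
  refine (card_le_card_of_injOn (fun p : Fin n × Fin n => (p.1 : ℕ)) (t := range t)
    ?_ ?_).trans_eq (card_range _)
  · intro p hp
    rw [mem_coe, mem_filter] at hp
    rw [mem_coe, mem_range, hp.2, Fin.val_succ]
    exact Nat.lt_succ_of_le (hS p hp.1)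
  · intro p hp q hq hpq
    rw [mem_coe, mem_filter] at hp hq
    exact Prod.ext (Fin.ext hpq) (Fin.succ_injective _ (hp.2.symm.trans hq.2))

omit hS in
lemma sum_epsRoot_apply (t : Fin (n + 1)) :
    (∑ p ∈ S, epsRoot p) t = #{p ∈ S | t = p.1.castSucc} - #{p ∈ S | t = p.2.succ} := by
  simp [epsRoot, Pi.single_apply, sum_sub_distrib, sum_boole]

lemma sum_epsRoot_mem_Icc (t : Fin (n + 1)) :
    -((t : ℕ) : ℤ) ≤ (∑ p ∈ S, epsRoot p) t ∧ (∑ p ∈ S, epsRoot p) t ≤ n - (t : ℕ) := by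
  have h₁ := card_filter_castSucc_fst_le hS t
  have h₂ := card_filter_succ_snd_le hS t
  have ht := t.is_le
  rw [sum_epsRoot_apply]
  omega

end Bounds

variable {v : Fin (n + 1) → ℤ} {ν : Fin n → ℤ}

section Forward

variable (hv : ∀ t : Fin (n + 1), -((t : ℕ) : ℤ) ≤ v t ∧ v t ≤ n - (t : ℕ))
  (hν : ((n : ℤ) + 1) • ν = fundCoords n v)
include hv hν

lemma nonneg_of_smul_eq_fundCoords (k : Fin n) : 0 ≤ ν k := by
  have hk := congrFun hν k
  rw [Pi.smul_apply, smul_eq_mul, fundCoords_apply] at hk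
  have h₁ := (hv k.castSucc).1
  have h₂ := (hv k.succ).2
  rw [Fin.val_castSucc] at h₁
  rw [Fin.val_succ] at h₂
  push_cast at h₂
  nlinarith

lemma sum_le_one_of_smul_eq_fundCoords : ∑ k, ν k ≤ 1 := by
  have hsum : ((n : ℤ) + 1) * ∑ k, ν k = v 0 - v (Fin.last n) := by
    rw [mul_sum, ← sum_fundCoords, ← hν]
    rfl
  have h₁ := (hv 0).2
  have h₂ := (hv (Fin.last n)).1
  simp only [Fin.val_zero, Fin.val_last, Nat.cast_zero] at h₁ h₂
  nlinarith

end Forward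

lemma fundCoords_sum_Iic (i : Fin n) :
    fundCoords n (∑ a ∈ Iic i, Pi.single a.castSucc 1) = Pi.single i 1 := by
  have h : ∑ a ∈ Iic i, (Pi.single a.castSucc 1 : Fin (n + 1) → ℤ) =
      ∑ x ∈ Iic i.castSucc, Pi.single x 1 := by
    rw [← Fin.map_castSuccEmb_Iic, sum_map]
    rfl
  ext k
  rw [h, fundCoords_apply, Finset.sum_apply, Finset.sum_apply, sum_pi_single, sum_pi_single]
  simp only [mem_Iic, Fin.castSucc_le_castSucc_iff, Fin.succ_le_castSucc_iff, Pi.single_apply]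
  split_ifs <;> grind

lemma fundCoords_sum_Ici (i : Fin n) :
    fundCoords n (∑ b ∈ Ici i, Pi.single b.succ 1) = -Pi.single i 1 := by
  have h : ∑ b ∈ Ici i, (Pi.single b.succ 1 : Fin (n + 1) → ℤ) =
      ∑ x ∈ Ici i.succ, Pi.single x 1 := by
    rw [← Fin.map_succEmb_Ici, sum_map]
    rfl
  ext k
  rw [h, fundCoords_apply, Finset.sum_apply, Finset.sum_apply, sum_pi_single, sum_pi_single]
  simp only [mem_Ici, Fin.succ_le_castSucc_iff, Fin.succ_le_succ_iff, Pi.neg_apply,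
    Pi.single_apply]
  split_ifs <;> grind

lemma sum_epsRoot_Iic_product_Ici (i : Fin n) :
    ∑ p ∈ Iic i ×ˢ Ici i, epsRoot p =
      (#(Ici i) : ℤ) • ∑ a ∈ Iic i, Pi.single a.castSucc 1 -
        (#(Iic i) : ℤ) • ∑ b ∈ Ici i, Pi.single b.succ 1 := by
  simp only [sum_product, epsRoot, sum_sub_distrib, sum_const, smul_sum, natCast_zsmul]

lemma isSumOfDistinctPosRootsA_smul_single (i : Fin n) :
    IsSumOfDistinctPosRootsA n (((n : ℤ) + 1) • Pi.single i 1) := by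
  have hS : ∀ p ∈ Iic i ×ˢ Ici i, p.1 ≤ p.2 := fun p hp =>
    (mem_Iic.mp (mem_product.mp hp).1).trans (mem_Ici.mp (mem_product.mp hp).2)
  refine ⟨Iic i ×ˢ Ici i, hS, ?_⟩
  rw [sum_posRootA_eq_fundCoords hS, sum_epsRoot_Iic_product_Ici, map_sub, map_zsmul, map_zsmul,
    fundCoords_sum_Iic, fundCoords_sum_Ici, Fin.card_Ici, Fin.card_Iic, smul_neg, sub_neg_eq_add,
    ← add_smul]
  congr 1
  push_cast [Nat.cast_sub i.is_lt.le]
  ring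

end TypeA

theorem stmt_6_general (n : ℕ) (ν : Fin n → ℤ) :
    IsSumOfDistinctPosRootsA n (((n : ℤ) + 1) • ν) ↔
      (ν = 0 ∨ ∃ i : Fin n, ν = Pi.single i 1) := by
  constructor
  · rintro ⟨S, hS, hsum⟩
    rw [TypeA.sum_posRootA_eq_fundCoords hS] at hsum
    exact eq_zero_or_eq_single_of_nonneg_of_sum_le_one
      (TypeA.nonneg_of_smul_eq_fundCoords (TypeA.sum_epsRoot_mem_Icc hS) hsum)
      (TypeA.sum_le_one_of_smul_eq_fundCoords (TypeA.sum_epsRoot_mem_Icc hS) hsum)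
  · rintro (rfl | ⟨i, rfl⟩)
    · exact ⟨∅, by simp, by simp⟩
    · exact TypeA.isSumOfDistinctPosRootsA_smul_single i

/-- In type `A_n` with `l = n + 1`, a weight `ν` (written in
fundamental-weight coordinates) has `(n+1)ν` a sum of distinct positive roots iff `ν` is a
fundamental weight `ϖ_i` or `ν = ϖ_0 = 0`. -/
theorem stmt_6 (n : ℕ) (hn : 1 ≤ n) (ν : Fin n → ℤ) :
    IsSumOfDistinctPosRootsA n (((n : ℤ) + 1) • ν) ↔
      (ν = 0 ∨ ∃ i : Fin n, ν = Pi.single i 1) :=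
  stmt_6_general n ν
end

section
/- For the root system of type A_n with n+1 = l(m+1), define w ∈ W = S_{n+1} on the ε-basis by w(ε_i) = ε_{w(i)} where, writing i − 1 = s_i l + t_i with 0 ≤ t_i ≤ l−1, one sets w(i) = t_i(m+1) + s_i + 1. Then the inversion set is Q(w) = {ε_i − ε_j ∈ Φ⁺ : s_i < s_j and t_i > t_j}. -/
lemma stmt_7_aux1 (l m si ti sj tj : ℕ)
    (hinv : tj * (m + 1) + sj < ti * (m + 1) + si)
    (hsi : si ≤ m) (h : ti ≤ tj) (hij : si * l + ti < sj * l + tj) : False := by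
  rcases Nat.lt_or_ge ti tj with hc | hc
  · nlinarith [Nat.mul_le_mul_right (m + 1) (show ti + 1 ≤ tj from hc)]
  · have heq : ti = tj := le_antisymm h hc
    subst heq
    have h1 : sj < si := by linarith
    have h2 := Nat.mul_le_mul_right l (show sj + 1 ≤ si by omega)
    linarith

lemma stmt_7_aux2 (l si ti sj tj : ℕ) (htj : tj < l)
    (hij : si * l + ti < sj * l + tj) (ht : tj < ti) (h : sj ≤ si) : False := by
  nlinarith [Nat.mul_le_mul_right l h]

lemma stmt_7_aux3 (m si ti sj tj : ℕ) (hsj : sj ≤ m) (ht : tj < ti) :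
    tj * (m + 1) + sj < ti * (m + 1) + si := by
  nlinarith [Nat.mul_le_mul_right (m + 1) (show tj + 1 ≤ ti from ht)]

/-- In type `A_n` with `n + 1 = l(m+1)`, define `w ∈ S_{n+1}` (in
0-based coordinates, `i ↔ i+1`) by `w(i) = (i % l)·(m+1) + i / l`, corresponding to the
decomposition `i = s_i·l + t_i` with `t_i = i % l` and `s_i = i / l`.  Then the inversion
set of `w` is `Q(w) = {ε_i − ε_j : i < j, s_i < s_j and t_i > t_j}`. -/
theorem stmt_7 (l m : ℕ) (hl : 1 < l)
    (w : ℕ → ℕ) (hw : ∀ a, w a = (a % l) * (m + 1) + a / l) :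
    {p : ℕ × ℕ | p.1 < p.2 ∧ p.2 < l * (m + 1) ∧ w p.2 < w p.1} =
      {p : ℕ × ℕ | p.1 < p.2 ∧ p.2 < l * (m + 1) ∧
        p.1 / l < p.2 / l ∧ p.2 % l < p.1 % l} := by
  have hl0 : 0 < l := by omega
  ext ⟨i, j⟩
  simp only [Set.mem_setOf_eq, hw]
  have hti : i % l < l := Nat.mod_lt i hl0
  have htj : j % l < l := Nat.mod_lt j hl0
  have hi := Nat.div_add_mod i l
  have hj := Nat.div_add_mod j l
  constructor
  · rintro ⟨hij, hjb, hinv⟩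
    have hsi : i / l ≤ m := by
      have : i / l < m + 1 := (Nat.div_lt_iff_lt_mul hl0).mpr
        (by rw [Nat.mul_comm]; omega)
      omega
    have ht : j % l < i % l := by
      by_contra h
      exact stmt_7_aux1 l m (i / l) (i % l) (j / l) (j % l) hinv hsi (by omega)
        (by rw [Nat.mul_comm (i / l) l, Nat.mul_comm (j / l) l]; omega)
    have hs : i / l < j / l := by
      by_contra h
      exact stmt_7_aux2 l (i / l) (i % l) (j / l) (j % l) htj
        (by rw [Nat.mul_comm (i / l) l, Nat.mul_comm (j / l) l]; omega) ht (by omega)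
    exact ⟨hij, hjb, hs, ht⟩
  · rintro ⟨hij, hjb, hs, ht⟩
    have hsj : j / l ≤ m := by
      have : j / l < m + 1 := (Nat.div_lt_iff_lt_mul hl0).mpr
        (by rw [Nat.mul_comm]; omega)
      omega
    exact ⟨hij, hjb, stmt_7_aux3 m (i / l) (i % l) (j / l) (j % l) hsj ht⟩
end

section
/- In type A_n with n+1 = (m+1)l, let σ ∈ S_{n+1} be the permutation σ = (1,2,…,l)(l+1,…,2l)⋯(ml+1,…,(m+1)l) and let w be as above. Then for 0 ≤ t ≤ l−1 one has w·0 = wσ^t·0 + l ϖ_{g(t)}, where g(t) = t(m+1) and ϖ_{g(0)} := 0, and moreover ℓ(wσ^t) = ℓ(w) + (m+1)t(l−t). -/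
/-!
Write an index as `a + l * b`, with `a < l` its position inside the `b`-th block. Then `w` sends
it to `a * (m + 1) + b` and `σ ^ t` rotates the position by `t`, so
`(w * σ ^ t) (a + l * b) = ((a + t) % l) * (m + 1) + b`. The weight identity becomes the
arithmetic `(w σ^t)⁻¹ k - w⁻¹ k = a - (a + t) % l`. For the lengths: a pair of indices in
different blocks is an inversion of `w σ^t` iff the rotation reverses the order of their
positions, and as the rotation is a bijection the number of such pairs does not depend on `t`;
a pair in one block is an inversion of the rotation by `t` on `Fin l`, which has `(l - t) t`.
-/

open Finset Equiv

def inversionCount {α : Type*} [Fintype α] [LinearOrder α] (u : α → α) : ℕ :=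
  #{p : α × α | p.1 < p.2 ∧ u p.2 < u p.1}

theorem inversionCount_id {α : Type*} [Fintype α] [LinearOrder α] :
    inversionCount (id : α → α) = 0 := by
  simp only [inversionCount, id, card_eq_zero, filter_eq_empty_iff]
  exact fun p _ h => h.1.asymm h.2

theorem card_filter_pair_prod {α β : Type*} [Fintype α] [Fintype β]
    (P : α → α → Prop) (Q : β → β → Prop) [DecidableRel P] [DecidableRel Q] :
    #{p : (α × β) × (α × β) | P p.1.1 p.2.1 ∧ Q p.1.2 p.2.2} =
      #{p : α × α | P p.1 p.2} * #{q : β × β | Q q.1 q.2} := by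
  rw [← card_product, ← filter_product, univ_product_univ]
  exact card_equiv (prodProdProdComm α β α β) (by simp)

theorem card_filter_apply_lt_apply {α : Type*} [Fintype α] [LinearOrder α] (π : Perm α) :
    #{p : α × α | π p.2 < π p.1} = #{p : α × α | p.2 < p.1} :=
  card_equiv (π.prodCongr π) (by simp)

theorem card_filter_fst_eq_snd {α : Type*} [Fintype α] [DecidableEq α] :
    #{p : α × α | p.1 = p.2} = Fintype.card α := by
  rw [← univ_product_univ, ← diag_eq_filter, diag_card, card_univ]

theorem Nat.add_mul_lt_add_mul_iff {n a b c d : ℕ} (hb : b < n) (hd : d < n) :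
    b + n * a < d + n * c ↔ a < c ∨ a = c ∧ b < d := by
  rcases lt_trichotomy a c with h | rfl | h
  · have : n * (a + 1) ≤ n * c := Nat.mul_le_mul_left n h
    simp only [h, true_or, iff_true]
    nlinarith
  · omega
  · have : n * (c + 1) ≤ n * a := Nat.mul_le_mul_left n h
    simp only [h.not_gt, h.ne', false_and, or_self, iff_false, not_lt]
    nlinarith

theorem finProdFinEquiv_lt_finProdFinEquiv {m n : ℕ} {x y : Fin m × Fin n} :
    finProdFinEquiv x < finProdFinEquiv y ↔ x.1 < y.1 ∨ x.1 = y.1 ∧ x.2 < y.2 := by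
  simp only [Fin.lt_def, finProdFinEquiv_apply_val, Fin.ext_iff]
  exact Nat.add_mul_lt_add_mul_iff x.2.isLt y.2.isLt

def blockEquiv (l n : ℕ) : Fin l × Fin n ≃ Fin (l * n) :=
  (prodComm _ _).trans (finProdFinEquiv.trans (finCongr (Nat.mul_comm n l)))

theorem blockEquiv_apply_val {l n : ℕ} (x : Fin l × Fin n) :
    (blockEquiv l n x : ℕ) = x.1 + l * x.2 := rfl

theorem blockEquiv_lt_blockEquiv {l n : ℕ} {x y : Fin l × Fin n} :
    blockEquiv l n x < blockEquiv l n y ↔ x.2 < y.2 ∨ x.2 = y.2 ∧ x.1 < y.1 := by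
  simp only [Fin.lt_def, blockEquiv_apply_val, Fin.ext_iff]
  exact Nat.add_mul_lt_add_mul_iff x.1.isLt y.1.isLt

theorem blockEquiv_apply_val_mod {l n : ℕ} (x : Fin l × Fin n) :
    (blockEquiv l n x : ℕ) % l = x.1 := by
  rw [blockEquiv_apply_val, Nat.add_mul_mod_self_left, Nat.mod_eq_of_lt x.1.isLt]

theorem blockEquiv_apply_val_div {l n : ℕ} (x : Fin l × Fin n) :
    (blockEquiv l n x : ℕ) / l = x.2 := by
  rw [blockEquiv_apply_val, Nat.add_mul_div_left _ _ x.1.pos, Nat.div_eq_of_lt x.1.isLt, zero_add]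

theorem inversionCount_of_apply_blockEquiv {l n : ℕ} (π : Perm (Fin l))
    (u : Fin (l * n) → Fin (l * n))
    (hu : ∀ x, u (blockEquiv l n x) = finProdFinEquiv (π x.1, x.2)) :
    inversionCount u = #{p : Fin l × Fin l | p.2 < p.1} * #{q : Fin n × Fin n | q.1 < q.2} +
      n * inversionCount π := by
  have hpair : ∀ x y : Fin l × Fin n,
      (blockEquiv l n x < blockEquiv l n y ∧ u (blockEquiv l n y) < u (blockEquiv l n x)) ↔
        (π y.1 < π x.1 ∧ x.2 < y.2) ∨ ((x.1 < y.1 ∧ π y.1 < π x.1) ∧ x.2 = y.2) := by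
    intro x y
    rw [blockEquiv_lt_blockEquiv, hu, hu, finProdFinEquiv_lt_finProdFinEquiv, π.injective.eq_iff]
    grind
  have htransport := card_equiv (s := {q : (Fin l × Fin n) × (Fin l × Fin n) |
      blockEquiv l n q.1 < blockEquiv l n q.2 ∧ u (blockEquiv l n q.2) < u (blockEquiv l n q.1)})
    (t := {p | p.1 < p.2 ∧ u p.2 < u p.1}) ((blockEquiv l n).prodCongr (blockEquiv l n)) (by simp)
  rw [inversionCount, ← htransport, filter_congr (fun q _ => hpair q.1 q.2), filter_or,
    card_union_of_disjoint]
  · rw [card_filter_pair_prod (fun a c => π c < π a) (· < ·),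
      card_filter_pair_prod (fun a c => a < c ∧ π c < π a) (· = ·),
      card_filter_apply_lt_apply, card_filter_fst_eq_snd, Fintype.card_fin, inversionCount,
      mul_comm n]
  · rw [disjoint_filter]
    rintro q - ⟨-, h⟩ ⟨-, h'⟩
    exact h.ne h'

theorem val_finRotate_pow_apply {n : ℕ} (s : ℕ) (i : Fin n) :
    ((finRotate n ^ s) i : ℕ) = (i + s) % n := by
  induction s with
  | zero => simp [Nat.mod_eq_of_lt i.isLt]
  | succ s ih =>
    have := i.neZero
    rw [pow_succ', Perm.mul_apply, finRotate_apply, Fin.val_add, ih, Fin.val_one', Nat.add_mod_mod,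
      Nat.mod_add_mod, add_assoc]

theorem inversionCount_finRotate_pow {n s : ℕ} (hs : s ≤ n) :
    inversionCount (finRotate n ^ s) = (n - s) * s := by
  have hpair : ∀ a c : Fin n, (a < c ∧ (finRotate n ^ s) c < (finRotate n ^ s) a) ↔
      ((a : ℕ) < n - s ∧ n - s ≤ (c : ℕ)) := by
    intro a c
    rw [Fin.lt_def, Fin.lt_def, val_finRotate_pow_apply, val_finRotate_pow_apply,
      Nat.add_mod_eq_ite, Nat.add_mod_eq_ite, Nat.mod_eq_of_lt a.isLt, Nat.mod_eq_of_lt c.isLt]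
    have := a.isLt
    have := c.isLt
    rcases Nat.lt_or_ge s n with h | h
    · rw [Nat.mod_eq_of_lt h]
      split_ifs <;> omega
    · rw [show s = n by omega, Nat.mod_self]
      split_ifs <;> omega
  have hlow : #{a : Fin n | (a : ℕ) < n - s} = n - s := by
    rw [Fin.card_filter_val_lt, min_eq_right (Nat.sub_le n s)]
  have hhigh : #{c : Fin n | n - s ≤ (c : ℕ)} = s := by
    have := card_filter_add_card_filter_not (s := univ) (fun c : Fin n => (c : ℕ) < n - s)
    simp only [not_lt, card_univ, Fintype.card_fin, hlow] at this
    omega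
  rw [inversionCount, filter_congr (fun p _ => hpair p.1 p.2), ← univ_product_univ,
    filter_product (fun a : Fin n => (a : ℕ) < n - s) (fun c : Fin n => n - s ≤ (c : ℕ)),
    card_product, hlow, hhigh]

theorem mul_pow_apply_blockEquiv {l n : ℕ} {w σ : Perm (Fin (l * n))}
    (hw : ∀ x, w (blockEquiv l n x) = finProdFinEquiv x)
    (hσ : ∀ x, σ (blockEquiv l n x) = blockEquiv l n (finRotate l x.1, x.2))
    (s : ℕ) (x : Fin l × Fin n) :
    (w * σ ^ s) (blockEquiv l n x) = finProdFinEquiv ((finRotate l ^ s) x.1, x.2) := by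
  have hsemi : Function.Semiconj (blockEquiv l n) (Prod.map (finRotate l) id) σ :=
    fun y => (hσ y).symm
  rw [Perm.mul_apply, Perm.coe_pow, Perm.coe_pow, ← hsemi.iterate_right s x, Prod.map_iterate,
    Function.iterate_id, hw]
  rfl

theorem val_symm_sub_val_symm_of_apply_blockEquiv {l n t : ℕ} {u w : Perm (Fin (l * n))}
    (hw : ∀ x, w (blockEquiv l n x) = finProdFinEquiv x)
    (hu : ∀ x, u (blockEquiv l n x) = finProdFinEquiv ((finRotate l ^ t) x.1, x.2))
    (ht : t < l) (k : Fin (l * n)) :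
    ((u.symm k : ℕ) : ℤ) - (w.symm k : ℕ) = if (k : ℕ) < t * n then (l : ℤ) - t else -t := by
  obtain ⟨x, rfl⟩ : ∃ x, u (blockEquiv l n x) = k :=
    ⟨(blockEquiv l n).symm (u.symm k), by simp⟩
  have hw_symm : w.symm (u (blockEquiv l n x)) = blockEquiv l n ((finRotate l ^ t) x.1, x.2) := by
    rw [hu, symm_apply_eq, hw]
  have hlt : (u (blockEquiv l n x) : ℕ) < t * n ↔ (x.1 + t) % l < t := by
    rw [hu, finProdFinEquiv_apply_val, val_finRotate_pow_apply, ← zero_add (t * n), mul_comm t,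
      Nat.add_mul_lt_add_mul_iff x.2.isLt x.2.pos]
    simp
  rw [if_congr hlt rfl rfl, symm_apply_apply, hw_symm, blockEquiv_apply_val, blockEquiv_apply_val,
    val_finRotate_pow_apply, Nat.add_mod_eq_ite, Nat.mod_eq_of_lt x.1.isLt, Nat.mod_eq_of_lt ht]
  have := x.1.isLt
  split_ifs <;> push_cast <;> omega

theorem apply_blockEquiv_of_val_eq {l m : ℕ} {w : Perm (Fin (l * m))}
    (hw : ∀ i : Fin (l * m), (w i : ℕ) = ((i : ℕ) % l) * m + (i : ℕ) / l)
    (x : Fin l × Fin m) : w (blockEquiv l m x) = finProdFinEquiv x := by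
  ext
  rw [hw, blockEquiv_apply_val_mod, blockEquiv_apply_val_div, finProdFinEquiv_apply_val]
  ring

theorem apply_blockEquiv_of_val_eq_rotate {l m : ℕ} {σ : Perm (Fin (l * m))}
    (hσ : ∀ i : Fin (l * m), (σ i : ℕ) = l * ((i : ℕ) / l) + (((i : ℕ) % l) + 1) % l)
    (x : Fin l × Fin m) : σ (blockEquiv l m x) = blockEquiv l m (finRotate l x.1, x.2) := by
  ext
  rw [hσ, blockEquiv_apply_val_mod, blockEquiv_apply_val_div, blockEquiv_apply_val,
    ← pow_one (finRotate l), val_finRotate_pow_apply]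
  ring

theorem stmt_8_general (l m : ℕ)
    (w σ : Equiv.Perm (Fin (l * (m + 1))))
    (hw : ∀ i : Fin (l * (m + 1)), (w i : ℕ) = ((i : ℕ) % l) * (m + 1) + (i : ℕ) / l)
    (hσ : ∀ i : Fin (l * (m + 1)), (σ i : ℕ) = l * ((i : ℕ) / l) + (((i : ℕ) % l) + 1) % l)
    (ρ : Fin (l * (m + 1)) → ℤ)
    (hρ : ∀ i, ρ i = (l * (m + 1) : ℤ) - 1 - (i : ℕ))
    (t : ℕ) (ht : t ≤ l - 1) :
    (∀ k : Fin (l * (m + 1)),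
      ρ (w.symm k) - ρ k =
        (ρ ((w * σ ^ t).symm k) - ρ k) +
          (if (k : ℕ) < t * (m + 1) then (l : ℤ) - (t : ℤ) else -(t : ℤ))) ∧
    (Finset.univ.filter (fun p : Fin (l * (m + 1)) × Fin (l * (m + 1)) =>
        p.1 < p.2 ∧ (w * σ ^ t) p.2 < (w * σ ^ t) p.1)).card =
      (Finset.univ.filter (fun p : Fin (l * (m + 1)) × Fin (l * (m + 1)) =>
        p.1 < p.2 ∧ w p.2 < w p.1)).card + (m + 1) * t * (l - t) := by
  have hw' := apply_blockEquiv_of_val_eq hw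
  have hu := mul_pow_apply_blockEquiv hw' (apply_blockEquiv_of_val_eq_rotate hσ) t
  constructor
  · intro k
    have htl : t < l := by
      have := Nat.pos_of_mul_pos_right k.pos
      omega
    have := val_symm_sub_val_symm_of_apply_blockEquiv hw' hu htl k
    rw [hρ, hρ, hρ]
    linarith
  · change inversionCount ⇑(w * σ ^ t) = inversionCount ⇑w + _
    rw [inversionCount_of_apply_blockEquiv _ _ hu,
      inversionCount_of_apply_blockEquiv 1 w (by simpa using hw'), Perm.coe_one, inversionCount_id,
      inversionCount_finRotate_pow (by omega)]
    ring

/-- In type `A_n` with `n + 1 = (m+1)l`, let `σ ∈ S_{n+1}` be the product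
of the `m+1` cycles of length `l` (0-based: `σ` advances each index cyclically within its
block of `l` consecutive indices), and let `w` be the permutation
`w(i) = (i % l)(m+1) + i/l`.  Realizing `ρ` in `ε`-coordinates (up to an irrelevant
constant) as `ρ_i = n − i` and the dot action by `u·0 = ρ∘u⁻¹ − ρ`, we have for
`0 ≤ t ≤ l − 1`:
`w·0 = (wσ^t)·0 + l ϖ_{t(m+1)}` (where `l ϖ_{t(m+1)}` is the vector with value `l − t` on
the first `t(m+1)` coordinates and `−t` elsewhere, and `ϖ_0 = 0`), and moreover
`ℓ(wσ^t) = ℓ(w) + (m+1)t(l−t)`, with length computed as the number of inversions. -/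
theorem stmt_8 (l m : ℕ) (hl : 1 < l)
    (w σ : Equiv.Perm (Fin (l * (m + 1))))
    (hw : ∀ i : Fin (l * (m + 1)), (w i : ℕ) = ((i : ℕ) % l) * (m + 1) + (i : ℕ) / l)
    (hσ : ∀ i : Fin (l * (m + 1)), (σ i : ℕ) = l * ((i : ℕ) / l) + (((i : ℕ) % l) + 1) % l)
    (ρ : Fin (l * (m + 1)) → ℤ)
    (hρ : ∀ i, ρ i = (l * (m + 1) : ℤ) - 1 - (i : ℕ))
    (t : ℕ) (ht : t ≤ l - 1) :
    (∀ k : Fin (l * (m + 1)),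
      ρ (w.symm k) - ρ k =
        (ρ ((w * σ ^ t).symm k) - ρ k) +
          (if (k : ℕ) < t * (m + 1) then (l : ℤ) - (t : ℤ) else -(t : ℤ))) ∧
    (Finset.univ.filter (fun p : Fin (l * (m + 1)) × Fin (l * (m + 1)) =>
        p.1 < p.2 ∧ (w * σ ^ t) p.2 < (w * σ ^ t) p.1)).card =
      (Finset.univ.filter (fun p : Fin (l * (m + 1)) × Fin (l * (m + 1)) =>
        p.1 < p.2 ∧ w p.2 < w p.1)).card + (m + 1) * t * (l - t) :=
  stmt_8_general l m w σ hw hσ ρ hρ t ht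
end

section
/- Let Φ be of type A_n with chosen J ⊆ Π such that Φ_J ≅ A_m^{r_1} × A_{m-1}^{r_2} arranged consecutively (J obtained from Π by removing the roots α_{t(m+1)} for 1 ≤ t ≤ r_1 and α_{r_1(m+1)+sm} for 1 ≤ s ≤ r_2−1), and let δ_A = ∑_{α∈J} α^∨. Then for every positive root β ∈ Φ⁺, ⟨β, δ_A⟩ ∈ {0, ±1, ±2}, and the maximum of ⟨λ, δ_A⟩ over all sums λ of distinct roots of Φ⁺ \ Φ_J⁺ equals (r_1 + r_2 − 1)(m r_1 + (m−1) r_2) = (r_1 + r_2 − 1)|J|. -/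
namespace Stmt9

/-- Number of `ε`-coordinates: `n + 1 = r₁(m+1) + r₂·m`, the indices `0, …, N-1` being
grouped into `r₁` consecutive blocks of size `m+1` followed by `r₂` blocks of size `m`. -/
def N (m r1 r2 : ℕ) : ℕ := r1 * (m + 1) + r2 * m

/-- The block containing index `i`. -/
def blk (m r1 : ℕ) (i : ℕ) : ℕ :=
  if i < r1 * (m + 1) then i / (m + 1) else r1 + (i - r1 * (m + 1)) / m

/-- The position of index `i` within its block. -/
def pos (m r1 : ℕ) (i : ℕ) : ℕ :=
  if i < r1 * (m + 1) then i % (m + 1) else (i - r1 * (m + 1)) % m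

/-- The size of the block containing `i`. -/
def sz (m r1 : ℕ) (i : ℕ) : ℕ := if i < r1 * (m + 1) then m + 1 else m

/-- The vector `δ_A = ∑_{α ∈ J} α^∨` in `ε`-coordinates: each block carries the pattern
`(1, 0, …, 0, −1)`. -/
def δA (m r1 : ℕ) (i : ℕ) : ℤ :=
  (if pos m r1 i = 0 then 1 else 0) - (if pos m r1 i = sz m r1 i - 1 then 1 else 0)

open Finset

/-- start index of block `k` -/
def st (m r1 k : ℕ) : ℕ := min k r1 * (m + 1) + (k - r1) * m

/-- size of block `k` -/
def szk (m r1 k : ℕ) : ℕ := if k < r1 then m + 1 else m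

/-- end index of block `k` -/
def en (m r1 k : ℕ) : ℕ := st m r1 k + (szk m r1 k - 1)

lemma st_spec (m r1 r2 : ℕ) {k d : ℕ} (hk : k < r1 + r2) (hd : d < szk m r1 k) :
    st m r1 k + d < N m r1 r2 ∧ blk m r1 (st m r1 k + d) = k ∧
    pos m r1 (st m r1 k + d) = d ∧ sz m r1 (st m r1 k + d) = szk m r1 k := by
  by_cases h : k < r1
  · have hst : st m r1 k = (m + 1) * k := by
      unfold st
      rw [min_eq_left h.le, Nat.sub_eq_zero_of_le h.le, zero_mul, add_zero, mul_comm]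
    have hd' : d < m + 1 := by simpa [szk, h] using hd
    have hlt : (m + 1) * k + d < r1 * (m + 1) := by
      have h1 : (m + 1) * k + d < (m + 1) * (k + 1) := by ring_nf; omega
      have h2 : (m + 1) * (k + 1) ≤ (m + 1) * r1 := Nat.mul_le_mul_left _ h
      have h3 : (m + 1) * r1 = r1 * (m + 1) := mul_comm _ _
      omega
    refine ⟨?_, ?_, ?_, ?_⟩
    · unfold N; omega
    · rw [hst]; unfold blk
      rw [if_pos hlt, Nat.mul_add_div (by omega), Nat.div_eq_of_lt hd']; omega
    · rw [hst]; unfold pos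
      rw [if_pos hlt, Nat.mul_add_mod, Nat.mod_eq_of_lt hd']
    · rw [hst]; unfold sz szk
      rw [if_pos hlt, if_pos h]
  · have hst : st m r1 k = r1 * (m + 1) + m * (k - r1) := by
      unfold st
      rw [min_eq_right (le_of_not_gt h), mul_comm (k - r1)]
    have hd' : d < m := by simpa [szk, h] using hd
    have hge : ¬ (st m r1 k + d < r1 * (m + 1)) := by rw [hst]; omega
    have hsub : st m r1 k + d - r1 * (m + 1) = m * (k - r1) + d := by rw [hst]; omega
    have hlt2 : m * (k - r1) + d < m * r2 := by
      have h1 : m * (k - r1) + d < m * (k - r1 + 1) := by ring_nf; omega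
      have h2 : m * (k - r1 + 1) ≤ m * r2 := Nat.mul_le_mul_left _ (by omega)
      omega
    refine ⟨?_, ?_, ?_, ?_⟩
    · unfold N; have : m * r2 = r2 * m := mul_comm _ _; omega
    · unfold blk
      rw [if_neg hge, hsub, Nat.mul_add_div (by omega), Nat.div_eq_of_lt hd']; omega
    · unfold pos
      rw [if_neg hge, hsub, Nat.mul_add_mod, Nat.mod_eq_of_lt hd']
    · unfold sz szk
      rw [if_neg hge, if_neg h]

lemma blk_pos_spec (m r1 r2 : ℕ) (hm : 1 ≤ m) {i : ℕ} (hi : i < N m r1 r2) :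
    blk m r1 i < r1 + r2 ∧ pos m r1 i < szk m r1 (blk m r1 i) ∧
    i = st m r1 (blk m r1 i) + pos m r1 i ∧ sz m r1 i = szk m r1 (blk m r1 i) := by
  have hc : (m + 1) * r1 = r1 * (m + 1) := Nat.mul_comm _ _
  by_cases h : i < r1 * (m + 1)
  · have hb : blk m r1 i = i / (m + 1) := by unfold blk; rw [if_pos h]
    have hp : pos m r1 i = i % (m + 1) := by unfold pos; rw [if_pos h]
    have hdiv : i / (m + 1) < r1 := Nat.div_lt_of_lt_mul (by omega)
    have hst : st m r1 (blk m r1 i) = (m + 1) * (i / (m + 1)) := by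
      unfold st
      rw [hb, min_eq_left hdiv.le, Nat.sub_eq_zero_of_le hdiv.le, zero_mul, add_zero, mul_comm]
    refine ⟨?_, ?_, ?_, ?_⟩
    · rw [hb]; omega
    · rw [hb, hp]; unfold szk; rw [if_pos hdiv]; exact Nat.mod_lt _ (by omega)
    · rw [hst, hp]; exact (Nat.div_add_mod i (m + 1)).symm
    · unfold sz szk; rw [if_pos h, hb, if_pos hdiv]
  · have hb : blk m r1 i = r1 + (i - r1 * (m + 1)) / m := by unfold blk; rw [if_neg h]
    have hp : pos m r1 i = (i - r1 * (m + 1)) % m := by unfold pos; rw [if_neg h]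
    have hj : i - r1 * (m + 1) < r2 * m := by unfold N at hi; omega
    have hdiv : (i - r1 * (m + 1)) / m < r2 := Nat.div_lt_of_lt_mul (by
      rw [Nat.mul_comm m r2]; exact hj)
    have hnot : ¬ (blk m r1 i < r1) := by
      rw [hb]; exact Nat.not_lt.mpr (Nat.le_add_right _ _)
    have hst : st m r1 (blk m r1 i) = r1 * (m + 1) + ((i - r1 * (m + 1)) / m) * m := by
      unfold st
      rw [hb, min_eq_right (by omega), Nat.add_sub_cancel_left]
    refine ⟨?_, ?_, ?_, ?_⟩
    · rw [hb]; exact Nat.add_lt_add_left hdiv r1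
    · rw [hp]; unfold szk; rw [if_neg hnot]; exact Nat.mod_lt _ (by omega)
    · rw [hst, hp]
      have := Nat.div_add_mod' (i - r1 * (m + 1)) m
      omega
    · unfold sz szk; rw [if_neg h, if_neg hnot]

lemma blk_mono (m r1 : ℕ) (hm : 1 ≤ m) {i j : ℕ} (hij : i ≤ j) :
    blk m r1 i ≤ blk m r1 j := by
  have hc : (m + 1) * r1 = r1 * (m + 1) := Nat.mul_comm _ _
  unfold blk
  split_ifs with h1 h2 h2
  · exact Nat.div_le_div_right hij
  · have : i / (m + 1) < r1 := Nat.div_lt_of_lt_mul (by omega)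
    exact le_add_right this.le
  · omega
  · have : (i - r1 * (m + 1)) / m ≤ (j - r1 * (m + 1)) / m :=
      Nat.div_le_div_right (by omega)
    omega


lemma szk_pos (m r1 k : ℕ) (hm : 1 ≤ m) : 1 ≤ szk m r1 k := by
  unfold szk; split_ifs <;> omega

lemma st_mem (m r1 r2 : ℕ) (hm : 1 ≤ m) {k : ℕ} (hk : k < r1 + r2) :
    st m r1 k < N m r1 r2 ∧ blk m r1 (st m r1 k) = k ∧ pos m r1 (st m r1 k) = 0 := by
  have := st_spec m r1 r2 hk (d := 0) (by have := szk_pos m r1 k hm; omega)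
  simpa using ⟨this.1, this.2.1, this.2.2.1⟩

lemma en_mem (m r1 r2 : ℕ) (hm : 1 ≤ m) {k : ℕ} (hk : k < r1 + r2) :
    en m r1 k < N m r1 r2 ∧ blk m r1 (en m r1 k) = k ∧
    pos m r1 (en m r1 k) = sz m r1 (en m r1 k) - 1 := by
  have hs := szk_pos m r1 k hm
  have := st_spec m r1 r2 hk (d := szk m r1 k - 1) (by omega)
  unfold en
  refine ⟨this.1, this.2.1, ?_⟩
  rw [this.2.2.1, this.2.2.2]

lemma filter_starts (m r1 r2 : ℕ) (hm : 1 ≤ m) :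
    (Finset.range (N m r1 r2)).filter (fun i => pos m r1 i = 0)
      = (Finset.range (r1 + r2)).image (st m r1) := by
  ext i
  simp only [Finset.mem_filter, Finset.mem_image, Finset.mem_range]
  constructor
  · rintro ⟨hi, hp⟩
    have h := blk_pos_spec m r1 r2 hm hi
    exact ⟨blk m r1 i, h.1, by rw [hp, add_zero] at h; exact h.2.2.1.symm⟩
  · rintro ⟨k, hk, rfl⟩
    have h := st_mem m r1 r2 hm hk
    exact ⟨h.1, h.2.2⟩

lemma filter_ends (m r1 r2 : ℕ) (hm : 1 ≤ m) :
    (Finset.range (N m r1 r2)).filter (fun i => pos m r1 i = sz m r1 i - 1)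
      = (Finset.range (r1 + r2)).image (en m r1) := by
  ext i
  simp only [Finset.mem_filter, Finset.mem_image, Finset.mem_range]
  constructor
  · rintro ⟨hi, hp⟩
    have h := blk_pos_spec m r1 r2 hm hi
    refine ⟨blk m r1 i, h.1, ?_⟩
    unfold en
    rw [← h.2.2.2, ← hp]
    omega
  · rintro ⟨k, hk, rfl⟩
    have h := en_mem m r1 r2 hm hk
    exact ⟨h.1, h.2.2⟩

lemma sum_start (m r1 r2 : ℕ) (hm : 1 ≤ m) (F : ℕ → ℤ) :
    ∑ x ∈ Finset.range (N m r1 r2), (if pos m r1 x = 0 then F (blk m r1 x) else 0)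
      = ∑ k ∈ Finset.range (r1 + r2), F k := by
  rw [← Finset.sum_filter, filter_starts m r1 r2 hm,
    Finset.sum_image (fun k1 h1 k2 h2 he => by
      have e1 := (st_mem m r1 r2 hm (Finset.mem_range.mp h1)).2.1
      have e2 := (st_mem m r1 r2 hm (Finset.mem_range.mp h2)).2.1
      rw [← e1, ← e2, he])]
  exact Finset.sum_congr rfl fun k hk => by
    rw [(st_mem m r1 r2 hm (Finset.mem_range.mp hk)).2.1]

lemma sum_end (m r1 r2 : ℕ) (hm : 1 ≤ m) (F : ℕ → ℤ) :
    ∑ x ∈ Finset.range (N m r1 r2),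
        (if pos m r1 x = sz m r1 x - 1 then F (blk m r1 x) else 0)
      = ∑ k ∈ Finset.range (r1 + r2), F k := by
  rw [← Finset.sum_filter, filter_ends m r1 r2 hm,
    Finset.sum_image (fun k1 h1 k2 h2 he => by
      have e1 := (en_mem m r1 r2 hm (Finset.mem_range.mp h1)).2.1
      have e2 := (en_mem m r1 r2 hm (Finset.mem_range.mp h2)).2.1
      rw [← e1, ← e2, he])]
  exact Finset.sum_congr rfl fun k hk => by
    rw [(en_mem m r1 r2 hm (Finset.mem_range.mp hk)).2.1]

lemma count_lt (b K : ℕ) (hK : K ≤ b) :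
    ∑ k ∈ Finset.range b, (if k < K then (1:ℤ) else 0) = K := by
  rw [Finset.sum_boole]
  have : (Finset.range b).filter (fun k => k < K) = Finset.range K := by
    ext k; simp only [Finset.mem_filter, Finset.mem_range]; omega
  rw [this, Finset.card_range]

lemma count_gt (b K : ℕ) (hK : K < b) :
    ∑ k ∈ Finset.range b, (if K < k then (1:ℤ) else 0) = (b:ℤ) - 1 - K := by
  rw [Finset.sum_boole]
  have : (Finset.range b).filter (fun k => K < k) = Finset.Ico (K+1) b := by
    ext k; simp only [Finset.mem_filter, Finset.mem_range, Finset.mem_Ico]; omega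
  rw [this, Nat.card_Ico]
  push_cast [Nat.cast_sub (by omega : K + 1 ≤ b)]
  ring

lemma not_both (m r1 : ℕ) (hm : 2 ≤ m) (i : ℕ) :
    ¬ (pos m r1 i = 0 ∧ pos m r1 i = sz m r1 i - 1) := by
  unfold sz; split_ifs <;> omega

lemma max_eq' (m r1 : ℕ) (hm : 2 ≤ m) (i j : ℕ) :
    max 0 (δA m r1 i - δA m r1 j)
      = (if pos m r1 i = 0 then (1:ℤ) else 0)
          * (1 - (if pos m r1 j = 0 then (1:ℤ) else 0))
        + (if pos m r1 j = sz m r1 j - 1 then (1:ℤ) else 0)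
          * (1 - (if pos m r1 i = sz m r1 i - 1 then (1:ℤ) else 0)) := by
  have hi := not_both m r1 hm i
  have hj := not_both m r1 hm j
  unfold δA
  split_ifs <;> simp_all <;> norm_num


open Finset in
lemma key_total (m r1 r2 : ℕ) (hm : 2 ≤ m) :
    ∑ p ∈ (range (N m r1 r2) ×ˢ range (N m r1 r2)).filter
        (fun p => blk m r1 p.1 < blk m r1 p.2),
      max 0 (δA m r1 p.1 - δA m r1 p.2)
    = ((N m r1 r2 : ℤ)) * ((r1 + r2 : ℤ) - 1) - (r1 + r2) * ((r1 + r2 : ℤ) - 1) := by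
  have hm1 : 1 ≤ m := by omega
  rw [Finset.sum_filter, Finset.sum_product]
  have step1 : ∀ x y : ℕ,
      (if blk m r1 x < blk m r1 y then max 0 (δA m r1 x - δA m r1 y) else 0)
      = (if blk m r1 x < blk m r1 y then
            (if pos m r1 x = 0 then (1:ℤ) else 0)
              * (1 - (if pos m r1 y = 0 then (1:ℤ) else 0)) else 0)
        + (if blk m r1 x < blk m r1 y then
            (if pos m r1 y = sz m r1 y - 1 then (1:ℤ) else 0)
              * (1 - (if pos m r1 x = sz m r1 x - 1 then (1:ℤ) else 0)) else 0) := by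
    intro x y
    by_cases h : blk m r1 x < blk m r1 y
    · simp only [if_pos h]
      exact max_eq' m r1 hm x y
    · simp only [if_neg h]
      ring
  simp only [step1, Finset.sum_add_distrib]
  have hA : ∑ x ∈ range (N m r1 r2), ∑ y ∈ range (N m r1 r2),
        (if blk m r1 x < blk m r1 y then
            (if pos m r1 x = 0 then (1:ℤ) else 0)
              * (1 - (if pos m r1 y = 0 then (1:ℤ) else 0)) else 0)
      = ∑ y ∈ range (N m r1 r2),
          (1 - (if pos m r1 y = 0 then (1:ℤ) else 0)) * (blk m r1 y : ℤ) := by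
    rw [Finset.sum_comm]
    refine Finset.sum_congr rfl fun y hy => ?_
    have hK : blk m r1 y < r1 + r2 :=
      (blk_pos_spec m r1 r2 hm1 (Finset.mem_range.mp hy)).1
    calc ∑ x ∈ range (N m r1 r2),
            (if blk m r1 x < blk m r1 y then
              (if pos m r1 x = 0 then (1:ℤ) else 0)
                * (1 - (if pos m r1 y = 0 then (1:ℤ) else 0)) else 0)
        = (∑ x ∈ range (N m r1 r2),
            (if pos m r1 x = 0 then (if blk m r1 x < blk m r1 y then (1:ℤ) else 0) else 0))
            * (1 - (if pos m r1 y = 0 then (1:ℤ) else 0)) := by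
          rw [Finset.sum_mul]
          refine Finset.sum_congr rfl fun x _ => ?_
          split_ifs <;> ring
      _ = (∑ k ∈ range (r1 + r2), (if k < blk m r1 y then (1:ℤ) else 0))
            * (1 - (if pos m r1 y = 0 then (1:ℤ) else 0)) := by
          rw [sum_start m r1 r2 hm1 (fun k => if k < blk m r1 y then (1:ℤ) else 0)]
      _ = ((blk m r1 y : ℤ)) * (1 - (if pos m r1 y = 0 then (1:ℤ) else 0)) := by
          rw [count_lt _ _ hK.le]
      _ = (1 - (if pos m r1 y = 0 then (1:ℤ) else 0)) * (blk m r1 y : ℤ) := by ring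
  have hB : ∑ x ∈ range (N m r1 r2), ∑ y ∈ range (N m r1 r2),
        (if blk m r1 x < blk m r1 y then
            (if pos m r1 y = sz m r1 y - 1 then (1:ℤ) else 0)
              * (1 - (if pos m r1 x = sz m r1 x - 1 then (1:ℤ) else 0)) else 0)
      = ∑ x ∈ range (N m r1 r2),
          (1 - (if pos m r1 x = sz m r1 x - 1 then (1:ℤ) else 0))
            * ((r1 + r2 : ℤ) - 1 - blk m r1 x) := by
    refine Finset.sum_congr rfl fun x hx => ?_
    have hK : blk m r1 x < r1 + r2 :=
      (blk_pos_spec m r1 r2 hm1 (Finset.mem_range.mp hx)).1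
    calc ∑ y ∈ range (N m r1 r2),
            (if blk m r1 x < blk m r1 y then
              (if pos m r1 y = sz m r1 y - 1 then (1:ℤ) else 0)
                * (1 - (if pos m r1 x = sz m r1 x - 1 then (1:ℤ) else 0)) else 0)
        = (∑ y ∈ range (N m r1 r2),
            (if pos m r1 y = sz m r1 y - 1 then
              (if blk m r1 x < blk m r1 y then (1:ℤ) else 0) else 0))
            * (1 - (if pos m r1 x = sz m r1 x - 1 then (1:ℤ) else 0)) := by
          rw [Finset.sum_mul]
          refine Finset.sum_congr rfl fun y _ => ?_
          split_ifs <;> ring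
      _ = (∑ k ∈ range (r1 + r2), (if blk m r1 x < k then (1:ℤ) else 0))
            * (1 - (if pos m r1 x = sz m r1 x - 1 then (1:ℤ) else 0)) := by
          rw [sum_end m r1 r2 hm1 (fun k => if blk m r1 x < k then (1:ℤ) else 0)]
      _ = ((r1 + r2 : ℤ) - 1 - blk m r1 x)
            * (1 - (if pos m r1 x = sz m r1 x - 1 then (1:ℤ) else 0)) := by
          rw [count_gt _ _ hK]
          push_cast
          ring
      _ = (1 - (if pos m r1 x = sz m r1 x - 1 then (1:ℤ) else 0))
            * ((r1 + r2 : ℤ) - 1 - blk m r1 x) := by ring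
  rw [hA, hB, ← Finset.sum_add_distrib]
  have step2 : ∀ i ∈ range (N m r1 r2),
      (1 - (if pos m r1 i = 0 then (1:ℤ) else 0)) * (blk m r1 i : ℤ)
        + (1 - (if pos m r1 i = sz m r1 i - 1 then (1:ℤ) else 0))
            * ((r1 + r2 : ℤ) - 1 - blk m r1 i)
      = ((r1 + r2 : ℤ) - 1)
        - ((if pos m r1 i = 0 then ((blk m r1 i : ℕ) : ℤ) else 0)
            + (if pos m r1 i = sz m r1 i - 1 then ((r1 + r2 : ℤ) - 1 - blk m r1 i) else 0)) := by
    intro i _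
    split_ifs <;> ring
  rw [Finset.sum_congr rfl step2, Finset.sum_sub_distrib, Finset.sum_add_distrib,
    Finset.sum_const, Finset.card_range,
    sum_start m r1 r2 hm1 (fun k => ((k : ℕ) : ℤ)),
    sum_end m r1 r2 hm1 (fun k => ((r1 + r2 : ℤ) - 1 - k)),
    ← Finset.sum_add_distrib]
  have step3 : ∀ k ∈ range (r1 + r2),
      ((k : ℕ) : ℤ) + ((r1 + r2 : ℤ) - 1 - k) = ((r1 + r2 : ℤ) - 1) := by
    intro k _; ring
  rw [Finset.sum_congr rfl step3, Finset.sum_const, Finset.card_range]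
  push_cast
  ring


lemma δA_cases (m r1 i : ℕ) : δA m r1 i = -1 ∨ δA m r1 i = 0 ∨ δA m r1 i = 1 := by
  unfold δA; split_ifs <;> norm_num


/-- In type `A_n` with `J` chosen so that
`Φ_J ≅ A_m^{r₁} × A_{m-1}^{r₂}` arranged consecutively and `δ_A = ∑_{α∈J} α^∨`:
every positive root `ε_i − ε_j` (`i < j`) pairs with `δ_A` to a value in `{0, ±1, ±2}`,
and the maximum of `⟨λ, δ_A⟩` over all sums `λ` of distinct positive roots outside
`Φ_J⁺` (i.e. roots `ε_i − ε_j` crossing between blocks) equals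
`(r₁ + r₂ − 1)(m r₁ + (m−1) r₂) = (r₁ + r₂ − 1)|J|`. -/
theorem stmt_9 (m r1 r2 : ℕ) (hm : 2 ≤ m) (hr1 : 1 ≤ r1) :
    (∀ i j : ℕ, i < j → j < N m r1 r2 →
      (δA m r1 i - δA m r1 j) ∈ ({-2, -1, 0, 1, 2} : Set ℤ)) ∧
    IsGreatest
      {x : ℤ | ∃ S : Finset (ℕ × ℕ),
        (∀ p ∈ S, p.1 < p.2 ∧ p.2 < N m r1 r2 ∧ blk m r1 p.1 ≠ blk m r1 p.2) ∧
        x = ∑ p ∈ S, (δA m r1 p.1 - δA m r1 p.2)}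
      (((r1 : ℤ) + (r2 : ℤ) - 1) * ((m : ℤ) * (r1 : ℤ) + ((m : ℤ) - 1) * (r2 : ℤ))) := by
  have hm1 : 1 ≤ m := by omega
  have hT : ((r1 : ℤ) + (r2 : ℤ) - 1) * ((m : ℤ) * (r1 : ℤ) + ((m : ℤ) - 1) * (r2 : ℤ))
      = ((N m r1 r2 : ℤ)) * ((r1 + r2 : ℤ) - 1) - (r1 + r2) * ((r1 + r2 : ℤ) - 1) := by
    unfold N; push_cast; ring
  constructor
  · intro i j _ _
    have hi := δA_cases m r1 i
    have hj := δA_cases m r1 j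
    simp only [Set.mem_insert_iff, Set.mem_singleton_iff]
    omega
  · set T := (range (N m r1 r2) ×ˢ range (N m r1 r2)).filter
        (fun p => blk m r1 p.1 < blk m r1 p.2) with hTdef
    constructor
    · refine ⟨T.filter (fun p => 0 < δA m r1 p.1 - δA m r1 p.2), ?_, ?_⟩
      · intro p hp
        rw [hTdef] at hp
        simp only [Finset.mem_filter, Finset.mem_product, Finset.mem_range] at hp
        obtain ⟨⟨⟨h1, h2⟩, h3⟩, _⟩ := hp
        refine ⟨?_, h2, Nat.ne_of_lt h3⟩
        by_contra hc
        exact absurd (blk_mono m r1 hm1 (Nat.le_of_not_lt hc)) (Nat.not_le.mpr h3)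
      · have hsplit := Finset.sum_filter_add_sum_filter_not T
          (fun p => 0 < δA m r1 p.1 - δA m r1 p.2)
          (fun p => max 0 (δA m r1 p.1 - δA m r1 p.2))
        have e1 : ∑ p ∈ T.filter (fun p => 0 < δA m r1 p.1 - δA m r1 p.2),
              max 0 (δA m r1 p.1 - δA m r1 p.2)
            = ∑ p ∈ T.filter (fun p => 0 < δA m r1 p.1 - δA m r1 p.2),
              (δA m r1 p.1 - δA m r1 p.2) :=
          Finset.sum_congr rfl fun p hp =>
            max_eq_right (le_of_lt (Finset.mem_filter.mp hp).2)
        have e2 : ∑ p ∈ T.filter (fun p => ¬ 0 < δA m r1 p.1 - δA m r1 p.2),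
              max 0 (δA m r1 p.1 - δA m r1 p.2) = 0 :=
          Finset.sum_eq_zero fun p hp =>
            max_eq_left (le_of_not_gt (Finset.mem_filter.mp hp).2)
        calc ((r1 : ℤ) + (r2 : ℤ) - 1) * ((m : ℤ) * (r1 : ℤ) + ((m : ℤ) - 1) * (r2 : ℤ))
            = ((N m r1 r2 : ℤ)) * ((r1 + r2 : ℤ) - 1)
                - (r1 + r2) * ((r1 + r2 : ℤ) - 1) := hT
          _ = ∑ p ∈ T, max 0 (δA m r1 p.1 - δA m r1 p.2) :=
              (key_total m r1 r2 hm).symm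
          _ = ∑ p ∈ T.filter (fun p => 0 < δA m r1 p.1 - δA m r1 p.2),
                max 0 (δA m r1 p.1 - δA m r1 p.2)
              + ∑ p ∈ T.filter (fun p => ¬ 0 < δA m r1 p.1 - δA m r1 p.2),
                max 0 (δA m r1 p.1 - δA m r1 p.2) := hsplit.symm
          _ = ∑ p ∈ T.filter (fun p => 0 < δA m r1 p.1 - δA m r1 p.2),
                (δA m r1 p.1 - δA m r1 p.2) := by rw [e1, e2, add_zero]
    · rintro x ⟨S, hS, rfl⟩
      have hsub : S ⊆ T := by
        intro p hp
        obtain ⟨h1, h2, h3⟩ := hS p hp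
        rw [hTdef]
        simp only [Finset.mem_filter, Finset.mem_product, Finset.mem_range]
        exact ⟨⟨lt_trans h1 h2, h2⟩, lt_of_le_of_ne (blk_mono m r1 hm1 h1.le) h3⟩
      calc ∑ p ∈ S, (δA m r1 p.1 - δA m r1 p.2)
          ≤ ∑ p ∈ S, max 0 (δA m r1 p.1 - δA m r1 p.2) :=
            Finset.sum_le_sum fun p _ => le_max_right _ _
        _ ≤ ∑ p ∈ T, max 0 (δA m r1 p.1 - δA m r1 p.2) :=
            Finset.sum_le_sum_of_subset_of_nonneg hsub fun p _ _ => le_max_left _ _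
        _ = ((N m r1 r2 : ℤ)) * ((r1 + r2 : ℤ) - 1)
              - (r1 + r2) * ((r1 + r2 : ℤ) - 1) := key_total m r1 r2 hm
        _ = ((r1 : ℤ) + (r2 : ℤ) - 1) * ((m : ℤ) * (r1 : ℤ) + ((m : ℤ) - 1) * (r2 : ℤ)) :=
            hT.symm


end Stmt9
end

section
/- Let η = (l^{m'}, s') be the partition of N = 2n+1 with m' parts equal to l and one part s', where 0 ≤ s' ≤ l−1 and l is odd. Then the B-collapse η_B (the largest partition ⊴ η in which every even part occurs with even multiplicity) is given by: η_B = η if s' is odd or s' = 0, and η_B = (l^{m'}, s'−1, 1) if s' is even and s' ≠ 0. -/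
namespace Stmt10

/-- Partial sums of the parts of a partition (given as a function `ℕ → ℕ`). -/
def psum (p : ℕ → ℕ) (k : ℕ) : ℕ := ∑ i ∈ Finset.range k, p i

/-- `p` is a partition of `Nn` (weakly decreasing, finitely supported, of total sum `Nn`). -/
def IsPartitionOf (Nn : ℕ) (p : ℕ → ℕ) : Prop :=
  Antitone p ∧ ∃ K, (∀ i, K ≤ i → p i = 0) ∧ psum p K = Nn

/-- Dominance order: `Dom p q` means `p ⊴ q`, i.e. all partial sums of `p` are `≤` those
of `q`. -/
def Dom (p q : ℕ → ℕ) : Prop := ∀ k, psum p k ≤ psum q k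

/-- Membership in `P₁(N)`: every (nonzero) even part occurs with even multiplicity. -/
def EvenPartsEvenMult (p : ℕ → ℕ) : Prop :=
  ∀ a : ℕ, 0 < a → Even a → Even {i | p i = a}.ncard

lemma psum_succ (p : ℕ → ℕ) (k : ℕ) : psum p (k + 1) = psum p k + p k :=
  Finset.sum_range_succ p k

lemma psum_mono (p : ℕ → ℕ) : Monotone (psum p) := fun _ _ h =>
  Finset.sum_le_sum_of_subset (Finset.range_subset_range.2 h)

lemma psum_stable (p : ℕ → ℕ) (K : ℕ) (h : ∀ i, K ≤ i → p i = 0) :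
    ∀ k, K ≤ k → psum p k = psum p K := by
  intro k hk
  induction k, hk using Nat.le_induction with
  | base => rfl
  | succ n hn ih => rw [psum_succ, h n hn, ih, Nat.add_zero]

lemma psum_const (p : ℕ → ℕ) (l m : ℕ) (h : ∀ i, i < m → p i = l) :
    ∀ k, k ≤ m → psum p k = k * l := by
  intro k hk
  induction k with
  | zero => simp [psum]
  | succ n ih => rw [psum_succ, ih (by omega), h n (by omega)]; ring

lemma sum_mod_two (s : Finset ℕ) (f : ℕ → ℕ) :
    (∑ i ∈ s, f i) % 2 = (s.filter (fun i => f i % 2 = 1)).card % 2 := by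
  induction s using Finset.induction with
  | empty => simp
  | @insert a s ha ih =>
    rw [Finset.sum_insert ha, Finset.filter_insert]
    by_cases h : f a % 2 = 1
    · rw [if_pos h, Finset.card_insert_of_notMem (fun hm => ha (Finset.mem_filter.1 hm).1)]
      omega
    · rw [if_neg h]
      omega

/-- Let `l > 1` be odd, `0 ≤ s' ≤ l − 1`, and let
`η = (l^{m'}, s')` be a partition of `N = m'·l + s' = 2n + 1`.  Then the `B`-collapse
`η_B` — the dominance-largest element of `P₁(N)` dominated by `η` — is `η` itself when
`s'` is odd or `s' = 0`, and is `(l^{m'}, s' − 1, 1)` when `s'` is even and nonzero. -/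
theorem stmt_10 (l m' s' : ℕ) (hodd : Odd l) (hl : 1 < l) (hs : s' ≤ l - 1)
    (hN : Odd (m' * l + s'))
    (η : ℕ → ℕ) (hη : ∀ i, η i = if i < m' then l else if i = m' then s' else 0)
    (ηB : ℕ → ℕ)
    (hηB : ∀ i, ηB i =
      if s' % 2 = 1 ∨ s' = 0 then η i
      else if i < m' then l else if i = m' then s' - 1 else if i = m' + 1 then 1 else 0) :
    IsPartitionOf (m' * l + s') ηB ∧ EvenPartsEvenMult ηB ∧ Dom ηB η ∧
      ∀ q : ℕ → ℕ, IsPartitionOf (m' * l + s') q → EvenPartsEvenMult q →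
        Dom q η → Dom q ηB := by
  have hl2 : l % 2 = 1 := Nat.odd_iff.mp hodd
  have hs'l : s' < l := by omega
  -- basic facts about η
  have hηc : ∀ i, i < m' → η i = l := fun i hi => by rw [hη]; simp [hi]
  have hηm : η m' = s' := by rw [hη]; simp
  have hη0 : ∀ i, m' + 1 ≤ i → η i = 0 := fun i hi => by
    rw [hη, if_neg (by omega), if_neg (by omega)]
  have hηanti : Antitone η := antitone_nat_of_succ_le fun n => by
    rw [hη, hη]; split_ifs <;> omega
  have hpη : ∀ k, k ≤ m' → psum η k = k * l := psum_const η l m' hηc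
  have hpηm1 : psum η (m' + 1) = m' * l + s' := by
    rw [psum_succ, hpη m' le_rfl, hηm]
  have hpηtop : ∀ k, m' + 1 ≤ k → psum η k = m' * l + s' := fun k hk => by
    rw [psum_stable η (m' + 1) hη0 k hk, hpηm1]
  by_cases hcase : s' % 2 = 1 ∨ s' = 0
  · -- Case A : ηB = η
    have hBA : ηB = η := funext fun i => by rw [hηB i, if_pos hcase]
    subst hBA
    refine ⟨⟨hηanti, m' + 1, hη0, hpηm1⟩, ?_, fun k => le_rfl, fun q _ _ h => h⟩
    intro a ha hae
    have ha2 : a % 2 = 0 := Nat.even_iff.mp hae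
    have hempty : {i | ηB i = a} = ∅ := by
      ext i
      simp only [Set.mem_setOf_eq, Set.mem_empty_iff_false, iff_false]
      intro h
      rw [hη] at h
      split_ifs at h <;> omega
    rw [hempty, Set.ncard_empty]
    exact Even.zero
  · -- Case B : s' even and nonzero
    have hB : ∀ i, ηB i = if i < m' then l else if i = m' then s' - 1
        else if i = m' + 1 then 1 else 0 := fun i => by rw [hηB i, if_neg hcase]
    push_neg at hcase
    obtain ⟨hs1, hs0⟩ := hcase
    have hs2 : s' % 2 = 0 := by omega
    have hm' : m' % 2 = 1 := by
      have h1 : Odd (m' * l) := (Nat.odd_add.mp hN).mpr (Nat.even_iff.mpr hs2)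
      exact Nat.odd_iff.mp (Nat.odd_mul.mp h1).1
    have hBc : ∀ i, i < m' → ηB i = l := fun i hi => by rw [hB]; simp [hi]
    have hBm : ηB m' = s' - 1 := by rw [hB]; simp
    have hBm1 : ηB (m' + 1) = 1 := by
      rw [hB, if_neg (by omega), if_neg (by omega), if_pos rfl]
    have hB0 : ∀ i, m' + 2 ≤ i → ηB i = 0 := fun i hi => by
      rw [hB, if_neg (by omega), if_neg (by omega), if_neg (by omega)]
    have hBanti : Antitone ηB := antitone_nat_of_succ_le fun n => by
      rw [hB, hB]; split_ifs <;> omega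
    have hpB : ∀ k, k ≤ m' → psum ηB k = k * l := psum_const ηB l m' hBc
    have hpBm1 : psum ηB (m' + 1) = m' * l + (s' - 1) := by
      rw [psum_succ, hpB m' le_rfl, hBm]
    have hpBm2 : psum ηB (m' + 2) = m' * l + s' := by
      rw [show m' + 2 = (m' + 1) + 1 from rfl, psum_succ, hpBm1, hBm1]; omega
    have hpBtop : ∀ k, m' + 2 ≤ k → psum ηB k = m' * l + s' := fun k hk => by
      rw [psum_stable ηB (m' + 2) hB0 k hk, hpBm2]
    refine ⟨⟨hBanti, m' + 2, hB0, hpBm2⟩, ?_, ?_, ?_⟩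
    · -- all parts of ηB are odd or zero
      intro a ha hae
      have ha2 : a % 2 = 0 := Nat.even_iff.mp hae
      have hempty : {i | ηB i = a} = ∅ := by
        ext i
        simp only [Set.mem_setOf_eq, Set.mem_empty_iff_false, iff_false]
        intro h
        rw [hB] at h
        split_ifs at h <;> omega
      rw [hempty, Set.ncard_empty]
      exact Even.zero
    · -- Dom ηB η
      intro k
      by_cases hk : k ≤ m'
      · rw [hpB k hk, hpη k hk]
      · by_cases hk1 : k = m' + 1
        · subst hk1; rw [hpBm1, hpηm1]; omega
        · rw [hpBtop k (by omega), hpηtop k (by omega)]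
    · -- maximality
      rintro q ⟨hqanti, K, hK0, hKsum⟩ hqev hqdom
      have hqN : ∀ k, psum q k ≤ m' * l + s' := fun k => by
        rcases le_or_gt k K with h | h
        · exact hKsum ▸ psum_mono q h
        · rw [psum_stable q K hK0 k h.le, hKsum]
      intro k
      by_cases hk : k ≤ m'
      · rw [hpB k hk]; exact (hqdom k).trans_eq (hpη k hk)
      by_cases hk1 : k = m' + 1
      swap
      · rw [hpBtop k (by omega)]; exact hqN k
      subst hk1
      rw [hpBm1]
      by_contra hcon
      have hqeq : psum q (m' + 1) = m' * l + s' := by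
        have := hqN (m' + 1); omega
      have hqtop : ∀ k, m' + 1 ≤ k → psum q k = m' * l + s' := by
        intro k hk
        induction k, hk using Nat.le_induction with
        | base => exact hqeq
        | succ n hn ih =>
          have h1 := psum_mono q (show n ≤ n + 1 by omega)
          have h2 := hqN (n + 1)
          omega
      have hqz : ∀ i, m' + 1 ≤ i → q i = 0 := by
        intro i hi
        have h1 := hqtop i hi
        have h2 := hqtop (i + 1) (by omega)
        have h3 := psum_succ q i
        omega
      set S := Finset.range (m' + 1) with hS
      have hoddcard : (S.filter (fun i => q i % 2 = 1)).card % 2 = 1 := by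
        have h1 := sum_mod_two S q
        have h2 : (∑ i ∈ S, q i) = m' * l + s' := hqeq
        have hNmod : (m' * l + s') % 2 = 1 := Nat.odd_iff.mp hN
        omega
      have hexz : ∃ i ∈ S, q i = 0 := by
        by_contra hnz
        push_neg at hnz
        set T := S.filter (fun i => ¬ q i % 2 = 1) with hTdef
        have hT : Even T.card := by
          have hTcard : T.card = ∑ a ∈ T.image q, (T.filter (fun i => q i = a)).card :=
            Finset.card_eq_sum_card_fiberwise (fun x hx => Finset.mem_image_of_mem q hx)
          rw [hTcard]
          apply Finset.even_sum
          intro a haim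
          obtain ⟨j, hjT, hjq⟩ := Finset.mem_image.mp haim
          have hja := Finset.mem_filter.mp hjT
          have ha0 : a ≠ 0 := hjq ▸ hnz j hja.1
          have hae : a % 2 = 0 := by
            have h2 := hja.2
            omega
          have hsetq : {i | q i = a} = ↑(T.filter fun i => q i = a) := by
            ext x
            simp only [Set.mem_setOf_eq, Finset.mem_coe, hTdef, hS,
              Finset.mem_filter, Finset.mem_range]
            constructor
            · intro hx
              have hxS : x < m' + 1 := by
                by_contra hxn
                have := hqz x (by omega)
                omega
              exact ⟨⟨hxS, by omega⟩, hx⟩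
            · exact fun hx => hx.2
          have hev := hqev a (Nat.pos_of_ne_zero ha0) (Nat.even_iff.mpr hae)
          rw [hsetq, Set.ncard_coe_finset] at hev
          exact hev
        have hpart := Finset.card_filter_add_card_filter_not
          (s := S) (p := fun i => q i % 2 = 1)
        have hScard : S.card = m' + 1 := Finset.card_range _
        rw [Nat.even_iff] at hT
        rw [← hTdef] at hpart
        omega
      obtain ⟨i, hiS, hi0⟩ := hexz
      have him : i ≤ m' := by
        have := Finset.mem_range.mp hiS; omega
      have hqm' : q m' = 0 := by
        have := hqanti him
        omega
      have h1 := psum_succ q m'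
      have h2 := hqdom m'
      rw [hpη m' le_rfl] at h2
      omega

end Stmt10
end

section
/- Let l be odd, 2n = m'l + s' with 0 ≤ s' ≤ l−1, and σ = (l^{m'}, s'). Then the C-collapse σ_C (the largest partition ⊴ σ in which every odd part occurs with even multiplicity) is: σ_C = σ when m' is even (so s' even), and σ_C = (l^{m'−1}, l−1, s'+1) when m' is odd (so s' odd). -/
namespace Stmt11

/-- Partial sums of the parts of a partition (given as a function `ℕ → ℕ`). -/
def psum (p : ℕ → ℕ) (k : ℕ) : ℕ := ∑ i ∈ Finset.range k, p i

/-- `p` is a partition of `Nn` (weakly decreasing, finitely supported, of total sum `Nn`). -/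
def IsPartitionOf (Nn : ℕ) (p : ℕ → ℕ) : Prop :=
  Antitone p ∧ ∃ K, (∀ i, K ≤ i → p i = 0) ∧ psum p K = Nn

/-- Dominance order: `Dom p q` means `p ⊴ q`. -/
def Dom (p q : ℕ → ℕ) : Prop := ∀ k, psum p k ≤ psum q k

/-- Membership in `P₋₁(N)`: every odd part occurs with even multiplicity. -/
def OddPartsEvenMult (p : ℕ → ℕ) : Prop :=
  ∀ a : ℕ, Odd a → Even {i | p i = a}.ncard

lemma psum_mono (p : ℕ → ℕ) : Monotone (psum p) :=
  fun _ _ h => Finset.sum_le_sum_of_subset (Finset.range_subset_range.2 h)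

lemma psum_succ (p : ℕ → ℕ) (k : ℕ) : psum p (k + 1) = psum p k + p k :=
  Finset.sum_range_succ p k

lemma psum_le_total {N : ℕ} {p : ℕ → ℕ} (hp : IsPartitionOf N p) (k : ℕ) :
    psum p k ≤ N := by
  obtain ⟨_, K, hK0, hKs⟩ := hp
  rcases le_total k K with h | h
  · exact hKs ▸ psum_mono p h
  · have heq : psum p k = psum p K := by
      unfold psum
      exact (Finset.sum_subset (Finset.range_subset_range.2 h)
        (fun x _ hx => hK0 x (Nat.le_of_not_lt (by simpa using hx)))).symm
    omega

lemma ncard_lt (n : ℕ) : {i : ℕ | i < n}.ncard = n := by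
  rw [show {i : ℕ | i < n} = ↑(Finset.range n) from by ext; simp,
    Set.ncard_coe_finset, Finset.card_range]

/-- Let `l > 1` be odd, `2n = m'·l + s'` with `0 ≤ s' ≤ l − 1`, and
`σ = (l^{m'}, s')`.  Then the `C`-collapse `σ_C` — the dominance-largest element of
`P₋₁(2n)` dominated by `σ` — is `σ` when `m'` is even (so `s'` is even), and is
`(l^{m'−1}, l−1, s'+1)` when `m'` is odd (so `s'` is odd). -/
theorem stmt_11 (l m' s' : ℕ) (hodd : Odd l) (hl : 1 < l) (hs : s' ≤ l - 1)
    (hN : Even (m' * l + s'))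
    (σ : ℕ → ℕ) (hσ : ∀ i, σ i = if i < m' then l else if i = m' then s' else 0)
    (σC : ℕ → ℕ)
    (hσC : ∀ i, σC i =
      if m' % 2 = 0 then σ i
      else if i < m' - 1 then l else if i = m' - 1 then l - 1
        else if i = m' then s' + 1 else 0) :
    IsPartitionOf (m' * l + s') σC ∧ OddPartsEvenMult σC ∧ Dom σC σ ∧
      ∀ q : ℕ → ℕ, IsPartitionOf (m' * l + s') q → OddPartsEvenMult q →
        Dom q σ → Dom q σC := by
  have hl2 : l % 2 = 1 := Nat.odd_iff.mp hodd
  rcases Nat.even_or_odd m' with hm | hm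
  · -- m' even : σC = σ
    have hm2 : m' % 2 = 0 := Nat.even_iff.mp hm
    have hσCσ : σC = σ := funext fun i => by rw [hσC i, if_pos hm2]
    subst hσCσ
    have hs'ev : s' % 2 = 0 := by
      obtain ⟨c, hc⟩ := hm.mul_right l
      obtain ⟨d, hd⟩ := hN
      rw [hc] at hd
      omega
    have hpsumσ : psum σC m' = m' * l := by
      unfold psum
      rw [Finset.sum_congr rfl
        (fun i hi => by rw [hσ i, if_pos (Finset.mem_range.mp hi)])]
      simp [mul_comm]
    refine ⟨⟨?_, m' + 1, ?_, ?_⟩, ?_, fun k => le_rfl, fun q _ _ h => h⟩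
    · intro i j hij
      simp only [hσ]
      split_ifs <;> omega
    · intro i hi
      rw [hσ i]
      split_ifs <;> omega
    · rw [psum_succ, hpsumσ, hσ m']
      split_ifs <;> omega
    · intro a ha
      have ha2 : a % 2 = 1 := Nat.odd_iff.mp ha
      by_cases hal : a = l
      · have hset : {i | σC i = a} = {i | i < m'} := by
          ext i
          simp only [Set.mem_setOf_eq, hσ i]
          split_ifs <;> omega
        rw [hset, ncard_lt]
        exact hm
      · have hset : {i | σC i = a} = ∅ := by
          ext i
          simp only [Set.mem_setOf_eq, Set.mem_empty_iff_false, iff_false, hσ i]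
          split_ifs <;> omega
        rw [hset]
        simp
  · -- m' odd
    have hm2 : m' % 2 = 1 := Nat.odd_iff.mp hm
    have hm2' : ¬ m' % 2 = 0 := by omega
    obtain ⟨M, rfl⟩ : ∃ M, m' = M + 1 := ⟨m' - 1, by omega⟩
    have hs2 : s' % 2 = 1 := by
      obtain ⟨c, hc⟩ := hm.mul hodd
      obtain ⟨d, hd⟩ := hN
      rw [hc] at hd
      omega
    have hsl : s' + 1 ≤ l - 1 := by omega
    have hσC' : ∀ i, σC i =
        if i < M then l else if i = M then l - 1 else if i = M + 1 then s' + 1 else 0 := by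
      intro i
      rw [hσC i, if_neg hm2']
      simp
    have hdiff : ∀ k, psum σ k = psum σC k + (if k = M + 1 then 1 else 0) := by
      intro k
      induction k with
      | zero => simp [psum]
      | succ k ih =>
        rw [psum_succ, psum_succ, ih, hσ k, hσC' k]
        split_ifs <;> omega
    have hpsum_σ : ∀ k, k ≤ M + 1 → psum σ k = k * l := by
      intro k hk
      unfold psum
      rw [Finset.sum_congr rfl
        (fun i hi => by
          rw [hσ i, if_pos (by have := Finset.mem_range.mp hi; omega)])]
      simp [mul_comm]
    have hMl : (M + 1) * l = M * l + l := by ring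
    refine ⟨⟨?_, M + 2, ?_, ?_⟩, ?_, ?_, ?_⟩
    · -- Antitone σC
      intro i j hij
      simp only [hσC']
      split_ifs <;> omega
    · intro i hi
      rw [hσC' i]
      split_ifs <;> omega
    · -- psum σC (M+2) = (M+1)*l + s'
      have h1 := hdiff (M + 2)
      rw [if_neg (by omega)] at h1
      have h2 : psum σ (M + 2) = (M + 1) * l + s' := by
        rw [psum_succ, hpsum_σ (M + 1) le_rfl, hσ (M + 1)]
        split_ifs <;> omega
      omega
    · -- OddPartsEvenMult σC
      intro a ha
      have ha2 : a % 2 = 1 := Nat.odd_iff.mp ha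
      by_cases hal : a = l
      · have hset : {i | σC i = a} = {i | i < M} := by
          ext i
          simp only [Set.mem_setOf_eq, hσC' i]
          split_ifs <;> omega
        rw [hset, ncard_lt]
        exact Nat.even_iff.mpr (by omega)
      · have hset : {i | σC i = a} = ∅ := by
          ext i
          simp only [Set.mem_setOf_eq, Set.mem_empty_iff_false, iff_false, hσC' i]
          split_ifs <;> omega
        rw [hset]
        simp
    · -- Dom σC σ
      intro k
      have h1 := hdiff k
      split_ifs at h1 <;> omega
    · -- maximality
      intro q hq hqodd hqdom k
      by_cases hk : k = M + 1
      · subst hk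
        have hσCval : psum σC (M + 1) + 1 = (M + 1) * l := by
          have h1 := hdiff (M + 1)
          rw [if_pos rfl] at h1
          rw [hpsum_σ (M + 1) le_rfl] at h1
          omega
        have hql : psum q (M + 1) ≤ (M + 1) * l := by
          have h1 := hqdom (M + 1)
          rw [hpsum_σ (M + 1) le_rfl] at h1
          exact h1
        rcases eq_or_lt_of_le hql with heq | hlt
        · exfalso
          obtain ⟨hanti, hpart⟩ := hq
          have hq0 : q 0 ≤ l := by
            have h1 := hqdom 1
            rw [hpsum_σ 1 (by omega)] at h1
            simpa [psum, Finset.sum_range_one] using h1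
          have hqle : ∀ i, q i ≤ l := fun i => le_trans (hanti (Nat.zero_le i)) hq0
          have hqM : q M = l := by
            have h1 : psum q (M + 1) = psum q M + q M := psum_succ q M
            have h2 := hqdom M
            rw [hpsum_σ M (by omega)] at h2
            have h3 := hqle M
            omega
          have hqlt : ∀ i, i < M + 1 → q i = l := fun i hi =>
            le_antisymm (hqle i) (hqM ▸ hanti (show i ≤ M by omega))
          by_cases hqM1 : q (M + 1) = l
          · have h1 : psum q (M + 2) = psum q (M + 1) + q (M + 1) := psum_succ q (M + 1)
            have h2 := psum_le_total ⟨hanti, hpart⟩ (M + 2)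
            rw [h1, ← heq, hqM1] at h2
            omega
          · have hset : {i | q i = l} = {i | i < M + 1} := by
              ext i
              simp only [Set.mem_setOf_eq]
              constructor
              · intro h
                by_contra hc
                push_neg at hc
                have h1 : q i ≤ q (M + 1) := hanti (by omega)
                have h2 : q (M + 1) < l := lt_of_le_of_ne (hqle (M + 1)) hqM1
                omega
              · exact fun h => hqlt i h
            have heven := hqodd l hodd
            rw [hset, ncard_lt] at heven
            have := Nat.even_iff.mp heven
            omega
        · omega
      · have h1 := hdiff k
        rw [if_neg hk] at h1
        have := hqdom k
        omega
end Stmt11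
end

section
/- Let Φ be of type D_n (n ≥ 4). Then 3σ is never equal to a sum γ_1 + γ_2 + γ_3 of three pairwise distinct positive roots for any weight σ; equivalently, the sum of any three distinct positive roots of D_n is not divisible by 3 in the root lattice. -/
/-- A positive root of `D_n` in `ε`-coordinates: `ε_i − ε_j` (when `s = false`) or
`ε_i + ε_j` (when `s = true`), for `i < j`. -/
def rootD (n : ℕ) (i j : Fin n) (s : Bool) : Fin n → ℤ :=
  fun k => (if k = i then 1 else 0) + (if k = j then (if s then 1 else -1) else 0)

/-- In type `D_n` (`n ≥ 4`), the sum of any three pairwise distinct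
positive roots is never divisible by `3` in the root lattice: for any `σ`,
`γ₁ + γ₂ + γ₃ ≠ 3σ`. -/
theorem stmt_14 (n : ℕ) (hn : 4 ≤ n)
    (i1 j1 i2 j2 i3 j3 : Fin n) (s1 s2 s3 : Bool)
    (h1 : i1 < j1) (h2 : i2 < j2) (h3 : i3 < j3)
    (h12 : rootD n i1 j1 s1 ≠ rootD n i2 j2 s2)
    (h13 : rootD n i1 j1 s1 ≠ rootD n i3 j3 s3)
    (h23 : rootD n i2 j2 s2 ≠ rootD n i3 j3 s3)
    (σ : Fin n → ℤ) :
    rootD n i1 j1 s1 + rootD n i2 j2 s2 + rootD n i3 j3 s3 ≠ (3 : ℤ) • σ := by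
  intro hsum
  set m := min i1 (min i2 i3) with hm
  have hmi1 : m ≤ i1 := min_le_left _ _
  have hmi2 : m ≤ i2 := le_trans (min_le_right _ _) (min_le_left _ _)
  have hmi3 : m ≤ i3 := le_trans (min_le_right _ _) (min_le_right _ _)
  have hcases : m = i1 ∨ m = i2 ∨ m = i3 := by
    rcases le_total i1 (min i2 i3) with h | h
    · left; rw [hm, min_eq_left h]
    · rcases le_total i2 i3 with h' | h'
      · right; left; rw [hm, min_eq_right h, min_eq_left h']
      · right; right; rw [hm, min_eq_right h, min_eq_right h']
  have hmj1 : m ≠ j1 := ne_of_lt (lt_of_le_of_lt hmi1 h1)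
  have hmj2 : m ≠ j2 := ne_of_lt (lt_of_le_of_lt hmi2 h2)
  have hmj3 : m ≠ j3 := ne_of_lt (lt_of_le_of_lt hmi3 h3)
  have hk := congrFun hsum m
  simp only [rootD, Pi.add_apply, Pi.smul_apply, smul_eq_mul, if_neg hmj1, if_neg hmj2,
    if_neg hmj3, add_zero] at hk
  have hall : m = i1 ∧ m = i2 ∧ m = i3 := by
    split_ifs at hk with e1 e2 e3 <;> first | tauto | omega
  obtain ⟨e1, e2, e3⟩ := hall
  have ei2 : i2 = i1 := e2.symm.trans e1
  have ei3 : i3 = i1 := e3.symm.trans e1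
  by_cases f12 : j1 = j2
  · subst f12
    by_cases f13 : j1 = j3
    · subst f13
      cases s1 <;> cases s2 <;> cases s3 <;>
        first
          | (apply h12; rw [ei2]; done)
          | (apply h13; rw [ei3]; done)
          | (apply h23; rw [ei2, ei3]; done)
    · -- j3 is distinct from j1 = j2; evaluate at j3
      have hk3 := congrFun hsum j3
      have a1 : j3 ≠ i1 := by rw [← ei3]; exact (ne_of_lt h3).symm
      have a2 : j3 ≠ j1 := Ne.symm f13
      simp [rootD, smul_eq_mul, ei2, ei3, a1, a2] at hk3
      cases s3 <;> simp at hk3 <;> omega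
  · by_cases f13 : j1 = j3
    · subst f13
      -- j2 is distinct from j1 = j3; evaluate at j2
      have hk2 := congrFun hsum j2
      have a1 : j2 ≠ i1 := by rw [← ei2]; exact (ne_of_lt h2).symm
      have a2 : j2 ≠ j1 := Ne.symm f12
      simp [rootD, smul_eq_mul, ei2, ei3, a1, a2] at hk2
      cases s2 <;> simp at hk2 <;> omega
    · -- j1 distinct from j2 and j3; evaluate at j1
      have hk1 := congrFun hsum j1
      have a1 : j1 ≠ i1 := (ne_of_lt h1).symm
      simp [rootD, smul_eq_mul, ei2, ei3, a1, f12, f13] at hk1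
      cases s1 <;> simp at hk1 <;> omega
end

section
/- Let Φ be of type F_4 realized in ℝ^4 as the set of vectors α with 2α ∈ ⊕ℤε_i and ⟨α,α⟩ ∈ {1,2}, i.e., Φ = {±ε_i} ∪ {±ε_i ± ε_j : i<j} ∪ {(±ε_1±ε_2±ε_3±ε_4)/2}. With ρ = (11ε_1 + 5ε_2 + 3ε_3 + ε_4)/2, the set Φ_0 = {α ∈ Φ : ⟨ρ, α^∨⟩ ≡ 0 mod 3} has {ε_1−ε_2, ε_2+ε_4, −ε_3, (ε_1+ε_2+ε_3−ε_4)/2} as a simple system and is a root system of type A_2 × A_2; in particular Φ_0 is not W-conjugate to Φ_J for any subset J of the simple roots of F_4. -/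
namespace Stmt17

/-- The Euclidean inner product on `ℝ⁴` (with rational coordinates). -/
def ip (x y : Fin 4 → ℚ) : ℚ := ∑ i, x i * y i

/-- The root system of type `F₄` in `ℝ⁴`: vectors `α` with `2α` integral and
`⟨α, α⟩ ∈ {1, 2}`; explicitly `{±ε_i} ∪ {±ε_i ± ε_j : i < j} ∪ {(±ε₁±ε₂±ε₃±ε₄)/2}`. -/
def PhiF4 : Set (Fin 4 → ℚ) :=
  {v | (∀ i, ∃ k : ℤ, 2 * v i = (k : ℚ)) ∧ v ≠ 0 ∧ (ip v v = 1 ∨ ip v v = 2)}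

/-- The Weyl weight `ρ = (11ε₁ + 5ε₂ + 3ε₃ + ε₄)/2` for the simple system
`Π = {ε₂−ε₃, ε₃−ε₄, ε₄, (ε₁−ε₂−ε₃−ε₄)/2}`. -/
def ρF4 : Fin 4 → ℚ := ![11/2, 5/2, 3/2, 1/2]

/-- `Φ₀ = {α ∈ Φ : ⟨ρ, α^∨⟩ ≡ 0 mod 3}`. -/
def Phi0 : Set (Fin 4 → ℚ) :=
  {α ∈ PhiF4 | ∃ k : ℤ, 2 * ip ρF4 α / ip α α = ((3 * k : ℤ) : ℚ)}

/-- The simple system `Π` of `F₄` fixed above. -/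
def PiF4 : Set (Fin 4 → ℚ) :=
  {![0, 1, -1, 0], ![0, 0, 1, -1], ![0, 0, 0, 1], ![1/2, -1/2, -1/2, -1/2]}

def a1 : Fin 4 → ℚ := ![1, -1, 0, 0]       -- ε₁ − ε₂
def a2 : Fin 4 → ℚ := ![0, 1, 0, 1]        -- ε₂ + ε₄
def b1 : Fin 4 → ℚ := ![0, 0, -1, 0]       -- −ε₃
def b2 : Fin 4 → ℚ := ![1/2, 1/2, 1/2, -1/2]  -- (ε₁+ε₂+ε₃−ε₄)/2

/-- `Δ` is a simple system of `Ψ`. -/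
def IsSimpleSystem (Ψ Δ : Set (Fin 4 → ℚ)) : Prop :=
  Δ ⊆ Ψ ∧ LinearIndependent ℚ ((↑) : Δ → (Fin 4 → ℚ)) ∧
    ∀ α ∈ Ψ, ∃ c : (Fin 4 → ℚ) →₀ ℤ, (c.support : Set (Fin 4 → ℚ)) ⊆ Δ ∧
      α = c.sum (fun x n => n • x) ∧ ((∀ x, 0 ≤ c x) ∨ (∀ x, c x ≤ 0))


/-!
Every root of `F₄` has half-integral coordinates, so doubling them turns `Φ` and `Φ₀` into finite
sets of integer vectors in `{-2, …, 2}⁴`, where the congruence `⟨ρ, α^∨⟩ ≡ 0 mod 3` becomes a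
divisibility that can be decided; this leaves exactly the twelve roots `±a₁, ±a₂, ±(a₁+a₂)`,
`±b₁, ±b₂, ±(b₁+b₂)`, and sign-coherence of their coordinates in `{a₁, a₂, b₁, b₂}` is immediate.

Since `{a₁, a₂, b₁, b₂}` is a basis, `Φ₀` spans `ℚ⁴`. If `w Φ₀ = Φ ∩ span J`, then `span J`
contains the image under `w` of a spanning set, so `span J = ℚ⁴` and `w Φ₀ = Φ`, which is
impossible because `Φ₀` has 12 elements and `Φ` has 48.
-/

lemma exists_nonneg_coeffs_of_mem_span_nat {V : Type*} [AddCommGroup V] {Δ : Set V} {α : V}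
    (h : α ∈ Submodule.span ℕ Δ) :
    ∃ c : V →₀ ℤ, (c.support : Set V) ⊆ Δ ∧ α = c.sum (fun x n => n • x) ∧ ∀ x, 0 ≤ c x := by
  obtain ⟨c, hcΔ, rfl⟩ := Submodule.mem_span_set.1 h
  refine ⟨c.mapRange Nat.cast Nat.cast_zero, ?_, ?_, fun x => by simp⟩
  · exact (Finset.coe_subset.2 Finsupp.support_mapRange).trans hcΔ
  · rw [Finsupp.sum_mapRange_index (fun x => zero_smul ℤ x)]
    simp only [natCast_zsmul]

lemma exists_signed_coeffs_of_mem_span_nat {V : Type*} [AddCommGroup V] {Δ : Set V} {α : V}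
    (h : α ∈ Submodule.span ℕ Δ ∨ -α ∈ Submodule.span ℕ Δ) :
    ∃ c : V →₀ ℤ, (c.support : Set V) ⊆ Δ ∧ α = c.sum (fun x n => n • x) ∧
      ((∀ x, 0 ≤ c x) ∨ (∀ x, c x ≤ 0)) := by
  rcases h with h | h
  · obtain ⟨c, hcΔ, hα, hc⟩ := exists_nonneg_coeffs_of_mem_span_nat h
    exact ⟨c, hcΔ, hα, .inl hc⟩
  · obtain ⟨c, hcΔ, hα, hc⟩ := exists_nonneg_coeffs_of_mem_span_nat h
    refine ⟨-c, by simpa using hcΔ, ?_, .inr fun x => by simpa using hc x⟩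
    rw [Finsupp.sum_neg_index (fun x => zero_smul ℤ x), ← neg_neg α, hα]
    simp [Finsupp.sum, neg_smul]

lemma Submodule.eq_top_of_linearEquiv_image_subset {K V : Type*} [Semiring K] [AddCommMonoid V]
    [Module K V] (w : V ≃ₗ[K] V) {S : Set V} (hS : Submodule.span K S = ⊤)
    {U : Submodule K V} (h : w '' S ⊆ U) : U = ⊤ := by
  rw [eq_top_iff, ← LinearEquiv.range w, LinearMap.range_eq_map, ← hS, Submodule.map_span]
  exact Submodule.span_le.2 h

lemma exists_intCast_mul_eq_div_iff {a b : ℤ} (c : ℤ) (hb : b ≠ 0) :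
    (∃ m : ℤ, (a : ℚ) / b = ((c * m : ℤ) : ℚ)) ↔ c * b ∣ a := by
  have hb' : (b : ℚ) ≠ 0 := by exact_mod_cast hb
  constructor
  · rintro ⟨m, hm⟩
    rw [div_eq_iff hb'] at hm
    have : (a : ℚ) = ((c * b * m : ℤ) : ℚ) := by rw [hm]; push_cast; ring
    exact ⟨m, Int.cast_injective this⟩
  · rintro ⟨m, hm⟩
    exact ⟨m, by rw [div_eq_iff hb', hm]; push_cast; ring⟩

def dotZ (k l : Fin 4 → ℤ) : ℤ := ∑ i, k i * l i

def halve : (Fin 4 → ℤ) →+ (Fin 4 → ℚ) where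
  toFun k i := k i / 2
  map_zero' := by ext; simp
  map_add' k l := by ext; simp [add_div]

lemma halve_injective : Function.Injective halve := by
  intro k l h
  funext i
  simpa [halve] using congrFun h i

lemma mem_range_halve_iff (v : Fin 4 → ℚ) :
    v ∈ Set.range halve ↔ ∀ i, ∃ k : ℤ, 2 * v i = k := by
  constructor
  · rintro ⟨k, rfl⟩ i
    exact ⟨k i, by simp [halve]; ring⟩
  · intro h
    choose k hk using h
    exact ⟨k, funext fun i => by simp [halve, ← hk]⟩

lemma ip_halve (k l : Fin 4 → ℤ) : ip (halve k) (halve l) = dotZ k l / 4 := by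
  simp only [ip, dotZ, halve, AddMonoidHom.coe_mk, ZeroHom.coe_mk, Int.cast_sum, Int.cast_mul,
    Finset.sum_div]
  congr 1; ext i; ring

noncomputable def rootCoords : Finset (Fin 4 → ℤ) :=
  (Fintype.piFinset fun _ => Finset.Icc (-2) 2).filter fun k => dotZ k k = 4 ∨ dotZ k k = 8

lemma dotZ_self_ne_zero {k : Fin 4 → ℤ} (hk : k ∈ rootCoords) : dotZ k k ≠ 0 := by
  rcases (Finset.mem_filter.1 hk).2 with h | h <;> omega

lemma mem_piFinset_of_dotZ_self_le {k : Fin 4 → ℤ} (hk : dotZ k k ≤ 8) :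
    k ∈ Fintype.piFinset fun _ => Finset.Icc (-2) 2 := by
  rw [Fintype.mem_piFinset]
  intro i
  have : k i * k i ≤ dotZ k k :=
    Finset.single_le_sum (f := fun j => k j * k j) (fun j _ => mul_self_nonneg (k j))
      (Finset.mem_univ i)
  rw [Finset.mem_Icc]
  constructor <;> nlinarith

lemma PhiF4_eq_image : PhiF4 = halve '' rootCoords := by
  ext v
  simp only [PhiF4, Set.mem_ofPred_eq, ← mem_range_halve_iff, Set.mem_image,
    Finset.mem_coe, rootCoords, Finset.mem_filter]
  constructor
  · rintro ⟨⟨k, rfl⟩, -, hnorm⟩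
    rw [ip_halve] at hnorm
    have hk : dotZ k k = 4 ∨ dotZ k k = 8 := by
      rcases hnorm with h | h
      · left; exact_mod_cast (div_eq_iff (by norm_num)).1 h
      · right; exact_mod_cast (div_eq_iff (by norm_num)).1 h
    exact ⟨k, ⟨mem_piFinset_of_dotZ_self_le (by omega), hk⟩, rfl⟩
  · rintro ⟨k, ⟨-, hk⟩, rfl⟩
    refine ⟨⟨k, rfl⟩, fun h0 => ?_, ?_⟩
    · obtain rfl : k = 0 := halve_injective (h0.trans (map_zero halve).symm)
      simp [dotZ] at hk
    · rw [ip_halve]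
      rcases hk with h | h <;> norm_num [h]

def kρ : Fin 4 → ℤ := ![11, 5, 3, 1]
def ka1 : Fin 4 → ℤ := ![2, -2, 0, 0]
def ka2 : Fin 4 → ℤ := ![0, 2, 0, 2]
def kb1 : Fin 4 → ℤ := ![0, 0, -2, 0]
def kb2 : Fin 4 → ℤ := ![1, 1, 1, -1]

lemma ρF4_eq_halve : ρF4 = halve kρ := by
  ext i; fin_cases i <;> norm_num [ρF4, kρ, halve]

lemma halve_ka1 : halve ka1 = a1 := by ext i; fin_cases i <;> norm_num [halve, ka1, a1]
lemma halve_ka2 : halve ka2 = a2 := by ext i; fin_cases i <;> norm_num [halve, ka2, a2]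
lemma halve_kb1 : halve kb1 = b1 := by ext i; fin_cases i <;> norm_num [halve, kb1, b1]
lemma halve_kb2 : halve kb2 = b2 := by ext i; fin_cases i <;> norm_num [halve, kb2, b2]

lemma coroot_pairing_halve (k : Fin 4 → ℤ) :
    2 * ip ρF4 (halve k) / ip (halve k) (halve k) = ((2 * dotZ kρ k : ℤ) : ℚ) / (dotZ k k : ℚ) := by
  rw [ρF4_eq_halve, ip_halve, ip_halve]
  push_cast
  ring

lemma Phi0_eq_image :
    Phi0 = halve '' (rootCoords.filter fun k => 3 * dotZ k k ∣ 2 * dotZ kρ k) := by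
  ext v
  simp only [Phi0, PhiF4_eq_image, Set.mem_ofPred_eq, Set.mem_image, Finset.mem_coe,
    Finset.mem_filter]
  constructor
  · rintro ⟨⟨k, hk, rfl⟩, hρ⟩
    rw [coroot_pairing_halve, exists_intCast_mul_eq_div_iff 3 (dotZ_self_ne_zero hk)] at hρ
    exact ⟨k, ⟨hk, hρ⟩, rfl⟩
  · rintro ⟨k, ⟨hk, hρ⟩, rfl⟩
    refine ⟨⟨k, hk, rfl⟩, ?_⟩
    rwa [coroot_pairing_halve, exists_intCast_mul_eq_div_iff 3 (dotZ_self_ne_zero hk)]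

lemma card_rootCoords : rootCoords.card = 48 := by decide

lemma filter_rootCoords_eq : rootCoords.filter (fun k => 3 * dotZ k k ∣ 2 * dotZ kρ k) =
    {ka1, -ka1, ka2, -ka2, ka1 + ka2, -(ka1 + ka2),
      kb1, -kb1, kb2, -kb2, kb1 + kb2, -(kb1 + kb2)} := by
  decide

lemma Phi0_eq : Phi0 = {a1, -a1, a2, -a2, a1 + a2, -(a1 + a2),
    b1, -b1, b2, -b2, b1 + b2, -(b1 + b2)} := by
  rw [Phi0_eq_image, filter_rootCoords_eq]
  simp only [Finset.coe_insert, Finset.coe_singleton, Set.image_insert_eq, Set.image_singleton,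
    map_neg, map_add, halve_ka1, halve_ka2, halve_kb1, halve_kb2]

lemma Phi0_ncard : Phi0.ncard = 12 := by
  rw [Phi0_eq_image, Set.ncard_image_of_injective _ halve_injective, Set.ncard_coe_finset,
    filter_rootCoords_eq]
  decide

lemma PhiF4_ncard : PhiF4.ncard = 48 := by
  rw [PhiF4_eq_image, Set.ncard_image_of_injective _ halve_injective, Set.ncard_coe_finset,
    card_rootCoords]

lemma linearIndependent_simpleSystem : LinearIndependent ℚ ![a1, a2, b1, b2] := by
  rw [Fintype.linearIndependent_iff]
  intro g hg
  have h0 := congrFun hg 0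
  have h1 := congrFun hg 1
  have h2 := congrFun hg 2
  have h3 := congrFun hg 3
  simp [Fin.sum_univ_four, a1, a2, b1, b2] at h0 h1 h2 h3
  intro i
  fin_cases i <;> simp <;> linarith

lemma range_simpleSystem :
    Set.range ![a1, a2, b1, b2] = ({a1, a2, b1, b2} : Set (Fin 4 → ℚ)) := by
  simp only [Matrix.range_cons, Matrix.range_empty, Set.union_empty, Set.singleton_union]

lemma span_simpleSystem : Submodule.span ℚ ({a1, a2, b1, b2} : Set (Fin 4 → ℚ)) = ⊤ := by
  rw [← range_simpleSystem]
  exact linearIndependent_simpleSystem.span_eq_top_of_card_eq_finrank' (by simp)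

lemma mem_span_nat_or_neg_mem_of_mem_Phi0 {α : Fin 4 → ℚ} (hα : α ∈ Phi0) :
    α ∈ Submodule.span ℕ {a1, a2, b1, b2} ∨ -α ∈ Submodule.span ℕ {a1, a2, b1, b2} := by
  have h : ∀ x ∈ ({a1, a2, b1, b2} : Set (Fin 4 → ℚ)), x ∈ Submodule.span ℕ {a1, a2, b1, b2} :=
    fun x hx => Submodule.subset_span hx
  have ha1 := h a1 (by simp)
  have ha2 := h a2 (by simp)
  have hb1 := h b1 (by simp)
  have hb2 := h b2 (by simp)
  have ha := add_mem ha1 ha2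
  have hb := add_mem hb1 hb2
  rw [Phi0_eq] at hα
  rcases hα with rfl | rfl | rfl | rfl | rfl | rfl | rfl | rfl | rfl | rfl | rfl | rfl <;>
    simp only [neg_neg, *, true_or, or_true]

/-- For `F₄` with `l = 3`:
`{ε₁−ε₂, ε₂+ε₄, −ε₃, (ε₁+ε₂+ε₃−ε₄)/2}` is a simple system of `Φ₀`; `Φ₀` is a root system
of type `A₂ × A₂` (explicitly the twelve roots `±a₁, ±a₂, ±(a₁+a₂), ±b₁, ±b₂, ±(b₁+b₂)`
with the two `A₂`-factors mutually orthogonal); and `Φ₀` is not `W`-conjugate to `Φ_J`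
for any subset `J` of the simple roots of `F₄`. -/
theorem stmt_17 :
    IsSimpleSystem Phi0 {a1, a2, b1, b2} ∧
    Phi0 = {a1, -a1, a2, -a2, a1 + a2, -(a1 + a2),
            b1, -b1, b2, -b2, b1 + b2, -(b1 + b2)} ∧
    (∀ x ∈ ({a1, a2, a1 + a2} : Set (Fin 4 → ℚ)),
      ∀ y ∈ ({b1, b2, b1 + b2} : Set (Fin 4 → ℚ)), ip x y = 0) ∧
    (∀ w : (Fin 4 → ℚ) ≃ₗ[ℚ] (Fin 4 → ℚ),
      (∀ x y, ip (w x) (w y) = ip x y) → w '' PhiF4 = PhiF4 →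
      ∀ J ⊆ PiF4, w '' Phi0 ≠ PhiF4 ∩ (Submodule.span ℚ J : Submodule ℚ (Fin 4 → ℚ))) := by
  have hΔ : ({a1, a2, b1, b2} : Set (Fin 4 → ℚ)) ⊆ Phi0 := by
    rw [Phi0_eq]
    intro x hx
    simp only [Set.mem_insert_iff, Set.mem_singleton_iff] at hx ⊢
    tauto
  refine ⟨⟨hΔ, ?_, fun α hα => ?_⟩, Phi0_eq, ?_, ?_⟩
  · rw [← range_simpleSystem]
    exact (linearIndepOn_id_range_iff linearIndependent_simpleSystem.injective).2
      linearIndependent_simpleSystem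
  · exact exists_signed_coeffs_of_mem_span_nat (mem_span_nat_or_neg_mem_of_mem_Phi0 hα)
  · intro x hx y hy
    simp only [Set.mem_insert_iff, Set.mem_singleton_iff] at hx hy
    rcases hx with rfl | rfl | rfl <;> rcases hy with rfl | rfl | rfl <;>
      simp [ip, Fin.sum_univ_four, a1, a2, b1, b2] <;> norm_num
  · intro w _ _ J _ hconj
    have hspan : Submodule.span ℚ Phi0 = ⊤ :=
      top_le_iff.1 (span_simpleSystem ▸ Submodule.span_mono hΔ)
    have hJ := Submodule.eq_top_of_linearEquiv_image_subset w hspan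
      (hconj ▸ Set.inter_subset_right)
    rw [hJ, Submodule.top_coe, Set.inter_univ] at hconj
    have hcard := congrArg Set.ncard hconj
    rw [Set.ncard_image_of_injective _ w.injective, Phi0_ncard, PhiF4_ncard] at hcard
    exact absurd hcard (by norm_num)

end Stmt17
end
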